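/- arXiv:2310.15619 — 7 statements merged into one kernel-verified Lean document; each statement's English description precedes it below -/
import Mathlib

section
/- Let f ∈ ℤ[t] be a nonzero polynomial which does not vanish at any root of unity, let ℓ_1, …, ℓ_r be distinct primes, and let p be a prime with p ∉ {ℓ_1, …, ℓ_r}. Then there exist an integer ν(f) and a constant k_0 ∈ ℕ such that for every n = ℓ_1^{k_1} ⋯ ℓ_r^{k_r} with min(k_1, …, k_r) ≥ k_0 one has ord_p(Δ_n(f)) = μ_p(f)·n + ν(f), where μ_p(f) := −m_p(f)/log p. -/
open Polynomial

/-- The Pierce–Lehmer sequence `Δ_n(f) = a_d^n ∏_i (α_i^n - 1)` of an integer polynomial,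
computed inside a field `K` containing all the roots of `f`. -/
noncomputable def pierceLehmer (K : Type*) [Field K] (f : Polynomial ℤ) (n : ℕ) : K :=
  ((f.map (Int.castRingHom K)).leadingCoeff) ^ n *
    (((f.map (Int.castRingHom K)).roots).map (fun α => α ^ n - 1)).prod

/-- The Mahler measure `|a_d| ∏_i max(1, |α_i|)` of an integer polynomial, computed using
the norm of a normed field `K` containing all the roots of `f`. -/
noncomputable def mahlerMeasure (K : Type*) [NormedField K] (f : Polynomial ℤ) : ℝ :=
  ‖(f.map (Int.castRingHom K)).leadingCoeff‖ *
    (((f.map (Int.castRingHom K)).roots).map (fun α => max 1 ‖α‖)).prod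

/-- The additive `p`-adic valuation `ord_p(x) = -log ‖x‖ / log p` on a normed field. -/
noncomputable def ordp (p : ℕ) {K : Type*} [NormedField K] (x : K) : ℝ :=
  -(Real.log ‖x‖ / Real.log p)


open IsUltrametricDist


noncomputable def auxNormHom (K : Type*) [NormedField K] : K →* ℝ :=
  ⟨⟨norm, norm_one⟩, norm_mul⟩

lemma aux_norm_msprod {K : Type*} [NormedField K] (s : Multiset K) :
    ‖s.prod‖ = (s.map (fun x => ‖x‖)).prod := by
  simpa [auxNormHom] using map_multiset_prod (auxNormHom K) s

section Aux

variable {p : ℕ} [Fact p.Prime] {K : Type*} [NormedField K] [Algebra ℚ_[p] K]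

lemma aux_norm_intCast (hext : ∀ x : ℚ_[p], ‖algebraMap ℚ_[p] K x‖ = ‖x‖) (z : ℤ) :
    ‖(z : K)‖ = ‖(z : ℚ_[p])‖ := by
  rw [← map_intCast (algebraMap ℚ_[p] K) z, hext]

lemma aux_ultra (hext : ∀ x : ℚ_[p], ‖algebraMap ℚ_[p] K x‖ = ‖x‖) :
    IsUltrametricDist K := by
  refine isUltrametricDist_of_forall_norm_natCast_le_one fun n => ?_
  have h := aux_norm_intCast hext (n : ℤ)
  push_cast at h
  rw [h]
  exact_mod_cast Padic.norm_int_le_one (p := p) (n : ℤ)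

lemma aux_sub_le {K : Type*} [NormedField K] [IsUltrametricDist K] (x y : K) :
    ‖x - y‖ ≤ max ‖x‖ ‖y‖ := by
  rw [sub_eq_add_neg]
  simpa using norm_add_le_max x (-y)

lemma aux_iso {K : Type*} [NormedField K] [IsUltrametricDist K] {x y : K}
    (h : ‖y‖ < ‖x‖) : ‖x - y‖ = ‖x‖ := by
  rw [sub_eq_add_neg, norm_add_eq_max_of_norm_ne_norm (by rw [norm_neg]; exact h.ne'),
    norm_neg, max_eq_left h.le]

end Aux

lemma aux_newton {K : Type*} [NormedField K] [IsUltrametricDist K] (s : Multiset K) :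
    (∀ k, ‖((s.map fun a => X - C a).prod).coeff k‖ ≤ (s.map fun a => max 1 ‖a‖).prod) ∧
      ∃ j, ‖((s.map fun a => X - C a).prod).coeff j‖ = (s.map fun a => max 1 ‖a‖).prod := by
  classical
  induction s using Multiset.induction_on with
  | empty =>
    constructor
    · intro k
      simp only [Multiset.map_zero, Multiset.prod_zero, Polynomial.coeff_one]
      split <;> simp
    · exact ⟨0, by simp⟩
  | cons a s ih =>
    obtain ⟨ihb, j', hj'⟩ := ih
    set q : Polynomial K := (s.map fun a => X - C a).prod with hq
    set P : ℝ := (s.map fun a => max 1 ‖a‖).prod with hP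
    have hP1 : (1:ℝ) ≤ P := Multiset.one_le_prod (by
      intro x hx
      obtain ⟨b, _, rfl⟩ := Multiset.mem_map.mp hx
      exact le_max_left _ _)
    have hP0 : (0:ℝ) < P := lt_of_lt_of_le one_pos hP1
    have hpoly : ((a ::ₘ s).map fun a => X - C a).prod = (X - C a) * q := by
      rw [Multiset.map_cons, Multiset.prod_cons]
    have hprodP : ((a ::ₘ s).map fun a => max 1 ‖a‖).prod = max 1 ‖a‖ * P := by
      rw [Multiset.map_cons, Multiset.prod_cons]
    have coeff0 : ((X - C a) * q).coeff 0 = -(a * q.coeff 0) := by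
      rw [sub_mul, Polynomial.coeff_sub, Polynomial.mul_coeff_zero]
      simp
    have coeffS : ∀ k, ((X - C a) * q).coeff (k+1) = q.coeff k - a * q.coeff (k+1) := by
      intro k
      rw [sub_mul, Polynomial.coeff_sub, Polynomial.coeff_X_mul]
      simp
    have hbound : ∀ k, ‖((a ::ₘ s).map fun a => X - C a).prod.coeff k‖ ≤
        ((a ::ₘ s).map fun a => max 1 ‖a‖).prod := by
      intro k
      rw [hpoly, hprodP]
      have haP : ‖a‖ * P ≤ max 1 ‖a‖ * P :=
        mul_le_mul_of_nonneg_right (le_max_right _ _) hP0.le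
      have hPP : P ≤ max 1 ‖a‖ * P := le_mul_of_one_le_left hP0.le (le_max_left _ _)
      cases k with
      | zero =>
        rw [coeff0, norm_neg, norm_mul]
        exact le_trans (mul_le_mul_of_nonneg_left (ihb 0) (norm_nonneg a)) haP
      | succ k =>
        rw [coeffS]
        refine le_trans (aux_sub_le _ _) (max_le (le_trans (ihb k) hPP) ?_)
        rw [norm_mul]
        exact le_trans (mul_le_mul_of_nonneg_left (ihb (k+1)) (norm_nonneg a)) haP
    refine ⟨hbound, ?_⟩
    by_cases hbig : 1 < ‖a‖
    · -- use any attained index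
      have hmax : max 1 ‖a‖ = ‖a‖ := max_eq_right hbig.le
      cases j' with
      | zero =>
        refine ⟨0, ?_⟩
        rw [hpoly, hprodP, coeff0, norm_neg, norm_mul, hj', hmax]
      | succ k =>
        refine ⟨k+1, ?_⟩
        rw [hpoly, hprodP, coeffS, norm_sub_rev, aux_iso ?_, norm_mul, hj', hmax]
        rw [norm_mul, hj']
        calc ‖q.coeff k‖ ≤ P := ihb k
        _ < ‖a‖ * P := by nlinarith
    · push_neg at hbig
      have hmax : max 1 ‖a‖ = 1 := max_eq_left hbig
      have hq0 : q ≠ 0 := by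
        refine Polynomial.Monic.ne_zero (Polynomial.monic_multiset_prod_of_monic _ _ ?_)
        intro b _
        exact Polynomial.monic_X_sub_C b
      have hj'le : j' ≤ q.natDegree := by
        refine Polynomial.le_natDegree_of_ne_zero fun h0 => ?_
        rw [h0, norm_zero] at hj'
        linarith
      set Q : ℕ → Prop := fun k => ‖q.coeff k‖ = P with hQ
      set j : ℕ := Nat.findGreatest Q q.natDegree with hj
      have hQj : ‖q.coeff j‖ = P := Nat.findGreatest_spec (P := Q) hj'le hj'
      have hnext : ‖q.coeff (j+1)‖ < P := by
        rcases le_or_gt (j+1) q.natDegree with h | h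
        · refine lt_of_le_of_ne (ihb _) ?_
          exact Nat.findGreatest_is_greatest (P := Q) (Nat.lt_succ_self j) h
        · rw [Polynomial.coeff_eq_zero_of_natDegree_lt h, norm_zero]
          exact hP0
      refine ⟨j+1, ?_⟩
      rw [hpoly, hprodP, coeffS, aux_iso ?_, hQj, hmax, one_mul]
      rw [hQj, norm_mul]
      calc ‖a‖ * ‖q.coeff (j+1)‖ ≤ 1 * ‖q.coeff (j+1)‖ :=
        mul_le_mul_of_nonneg_right hbig (norm_nonneg _)
      _ < P := by rw [one_mul]; exact hnext
section Aux2
open Polynomial IsUltrametricDist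
variable {p : ℕ} [Fact p.Prime] {K : Type*} [NormedField K] [Algebra ℚ_[p] K]

lemma aux_natCast_le_one (hext : ∀ x : ℚ_[p], ‖algebraMap ℚ_[p] K x‖ = ‖x‖) (n : ℕ) :
    ‖(n : K)‖ ≤ 1 := by
  have h := aux_norm_intCast hext (n : ℤ)
  push_cast at h
  rw [h]
  exact_mod_cast Padic.norm_int_le_one (p := p) (n : ℤ)

lemma aux_natCast_eq_one (hext : ∀ x : ℚ_[p], ‖algebraMap ℚ_[p] K x‖ = ‖x‖) {n : ℕ}
    (hn : ¬ p ∣ n) : ‖(n : K)‖ = 1 := by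
  refine le_antisymm (aux_natCast_le_one hext n) ?_
  have h := aux_norm_intCast hext (n : ℤ)
  push_cast at h
  rw [h]
  by_contra hlt
  push_neg at hlt
  have := (Padic.norm_intCast_lt_one_iff (p := p) (k := (n : ℤ))).mp (by exact_mod_cast hlt)
  exact hn (by exact_mod_cast this)

lemma aux_descend [IsUltrametricDist K] (hext : ∀ x : ℚ_[p], ‖algebraMap ℚ_[p] K x‖ = ‖x‖)
    {β : K} (hβ : ‖β‖ ≤ 1) (h : ‖β ^ p - 1‖ < 1) : ‖β - 1‖ < 1 := by
  have hp : p.Prime := Fact.out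
  have hpnorm : ‖(p : K)‖ < 1 := by
    have h1 := aux_norm_intCast hext (p : ℤ)
    push_cast at h1
    rw [h1]
    exact_mod_cast (Padic.norm_intCast_lt_one_iff (p := p) (k := (p : ℤ))).mpr (by exact_mod_cast dvd_rfl)
  have hexp := add_pow_prime_eq hp β (-1 : K)
  set S : K := ∑ k ∈ Finset.Ioo 0 p, β ^ k * (-1 : K) ^ (p - k) * ((p.choose k / p : ℕ) : K) with hS
  have hSle : ‖S‖ ≤ 1 := by
    refine norm_sum_le_of_forall_le_of_nonneg zero_le_one fun i _ => ?_
    rw [norm_mul, norm_mul, norm_pow, norm_pow, norm_neg, norm_one, one_pow, mul_one]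
    exact mul_le_one₀ (pow_le_one₀ (norm_nonneg _) hβ) (norm_nonneg _)
      (aux_natCast_le_one hext _)
  have hSeq : β * (-1 : K) * ∑ k ∈ Finset.Ioo 0 p, β ^ (k - 1) * (-1 : K) ^ (p - k - 1) *
      ((p.choose k / p : ℕ) : K) = S := by
    rw [hS, Finset.mul_sum]
    refine Finset.sum_congr rfl fun k hk => ?_
    obtain ⟨hk1, hk2⟩ := Finset.mem_Ioo.mp hk
    have e1 : β ^ k = β * β ^ (k - 1) := by rw [← pow_succ']; congr 1; omega
    have e2 : (-1 : K) ^ (p - k) = (-1) * (-1 : K) ^ (p - k - 1) := by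
      rw [← pow_succ']; congr 1; omega
    rw [e1, e2]; ring
  obtain ⟨W, hWeq, hWle⟩ : ∃ W : K, (β - 1) ^ p = (β ^ p - 1) + (p : K) * W ∧ ‖W‖ ≤ 1 := by
    rcases hp.eq_two_or_odd' with h2 | hodd
    · subst h2
      refine ⟨S + 1, by rw [show ((-1 : K)) ^ 2 = 1 by ring] at hexp; linear_combination hexp + 2 * hSeq, ?_⟩
      exact le_trans (norm_add_le_max _ _) (by rw [norm_one]; exact max_le hSle le_rfl)
    · refine ⟨S, ?_, hSle⟩
      rw [hodd.neg_one_pow] at hexp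
      linear_combination hexp + (p : K) * hSeq
  have hkey : ‖(β - 1) ^ p‖ < 1 := by
    rw [hWeq]
    refine lt_of_le_of_lt (norm_add_le_max _ _) (max_lt h ?_)
    rw [norm_mul]
    calc ‖(p : K)‖ * ‖W‖ ≤ ‖(p : K)‖ * 1 := by
          exact mul_le_mul_of_nonneg_left hWle (norm_nonneg _)
    _ < 1 := by rw [mul_one]; exact hpnorm
  by_contra hc
  push_neg at hc
  have : (1:ℝ) ≤ ‖(β - 1) ^ p‖ := by
    rw [norm_pow]
    exact one_le_pow₀ hc
  linarith

lemma aux_norm_le_one_of {K : Type*} [NormedField K] [IsUltrametricDist K] {β : K}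
    (h : ‖β - 1‖ < 1) : ‖β‖ ≤ 1 := by
  have hβ : β = (β - 1) + 1 := by ring
  rw [hβ]
  refine le_trans (norm_add_le_max _ _) ?_
  rw [norm_one]
  exact max_le h.le le_rfl

lemma aux_geom_le {K : Type*} [NormedField K] [IsUltrametricDist K] {β : K}
    (h : ‖β - 1‖ < 1) (q : ℕ) : ‖β ^ q - 1‖ ≤ ‖β - 1‖ := by
  rw [← geom_sum_mul, norm_mul]
  have h1 : ‖∑ i ∈ Finset.range q, β ^ i‖ ≤ 1 :=
    norm_sum_le_of_forall_le_of_nonneg zero_le_one fun i _ => by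
      rw [norm_pow]; exact pow_le_one₀ (norm_nonneg _) (aux_norm_le_one_of h)
  nlinarith [norm_nonneg (β - 1)]

lemma aux_geom_eq [IsUltrametricDist K] (hext : ∀ x : ℚ_[p], ‖algebraMap ℚ_[p] K x‖ = ‖x‖)
    {β : K} (h : ‖β - 1‖ < 1) {q : ℕ} (hq : ¬ p ∣ q) : ‖β ^ q - 1‖ = ‖β - 1‖ := by
  rw [← geom_sum_mul, norm_mul]
  have hsum : ‖∑ i ∈ Finset.range q, β ^ i‖ = 1 := by
    have hdecomp : ∑ i ∈ Finset.range q, β ^ i = (q : K) + ∑ i ∈ Finset.range q, (β ^ i - 1) := by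
      rw [Finset.sum_sub_distrib]
      simp
    have h1 : ‖∑ i ∈ Finset.range q, (β ^ i - 1)‖ < 1 :=
      lt_of_le_of_lt (norm_sum_le_of_forall_le_of_nonneg (norm_nonneg _)
        fun i _ => aux_geom_le h i) h
    have hq1 : ‖(q : K)‖ = 1 := aux_natCast_eq_one hext hq
    rw [hdecomp, norm_add_eq_max_of_norm_ne_norm (by rw [hq1]; exact (ne_of_lt h1).symm),
      hq1, max_eq_left h1.le]
  rw [hsum, one_mul]

lemma aux_analysis [IsUltrametricDist K] (hext : ∀ x : ℚ_[p], ‖algebraMap ℚ_[p] K x‖ = ‖x‖)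
    {α : K} (hα : ‖α‖ = 1) (hfin : {m : ℕ | 0 < m ∧ ‖α ^ m - 1‖ < 1}.Nonempty)
    {m₀ : ℕ} (hm₀ : m₀ = sInf {m : ℕ | 0 < m ∧ ‖α ^ m - 1‖ < 1})
    {n : ℕ} (hn : 0 < n) (hpn : ¬ p ∣ n) :
    ‖α ^ n - 1‖ = if m₀ ∣ n then ‖α ^ m₀ - 1‖ else 1 := by
  subst hm₀
  set m₀ := sInf {m : ℕ | 0 < m ∧ ‖α ^ m - 1‖ < 1} with hm₀
  obtain ⟨hm₀pos, hm₀lt⟩ : 0 < m₀ ∧ ‖α ^ m₀ - 1‖ < 1 := Nat.sInf_mem hfin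
  split_ifs with hdvd
  · -- divisible case
    set q := n / m₀ with hqdef
    have hq : n = m₀ * q := by rw [hqdef, Nat.mul_div_cancel' hdvd]
    have hpq : ¬ p ∣ q := fun hc => hpn (hq ▸ Dvd.dvd.mul_left hc m₀)
    rw [hq, pow_mul]
    exact aux_geom_eq hext hm₀lt hpq
  · -- non-divisible case
    have hle : ‖α ^ n - 1‖ ≤ 1 := by
      refine le_trans (aux_sub_le _ _) ?_
      rw [norm_pow, hα, one_pow, norm_one]
      simp
    rcases lt_or_eq_of_le hle with hlt | heq
    swap
    · exact heq
    · exfalso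
      set s := n % m₀ with hs
      have hspos : 0 < s := Nat.pos_of_ne_zero fun h0 => hdvd (Nat.dvd_of_mod_eq_zero h0)
      have hslt : s < m₀ := Nat.mod_lt _ hm₀pos
      have hdec : α ^ s - 1 = -(α ^ s * ((α ^ m₀) ^ (n / m₀) - 1)) + (α ^ n - 1) := by
        have : α ^ n = α ^ (m₀ * (n / m₀)) * α ^ s := by
          rw [← pow_add]
          congr 1
          exact (Nat.div_add_mod n m₀).symm ▸ rfl
        rw [this, pow_mul]
        ring
      have hsmall : ‖α ^ s - 1‖ < 1 := by
        rw [hdec]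
        refine lt_of_le_of_lt (norm_add_le_max _ _) (max_lt ?_ hlt)
        rw [norm_neg, norm_mul, norm_pow, hα, one_pow, one_mul]
        exact lt_of_le_of_lt (aux_geom_le hm₀lt _) hm₀lt
      have : m₀ ≤ s := Nat.sInf_le ⟨hspos, hsmall⟩
      omega
end Aux2
section Aux3
open Polynomial IsUltrametricDist IntermediateField
variable {p : ℕ} [Fact p.Prime] {K : Type*} [NormedField K] [Algebra ℚ_[p] K]

lemma aux_exists_small [Algebra.IsAlgebraic ℚ_[p] K]
    (hext : ∀ x : ℚ_[p], ‖algebraMap ℚ_[p] K x‖ = ‖x‖) {α : K} (hα : ‖α‖ = 1) :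
    {m : ℕ | 0 < m ∧ ‖α ^ m - 1‖ < 1}.Nonempty := by
  letI : NormedSpace ℚ_[p] K :=
    { norm_smul_le := fun c x => by rw [Algebra.smul_def, norm_mul, hext] }
  haveI : Algebra.IsIntegral ℚ_[p] K := Algebra.IsAlgebraic.isIntegral
  have hint : IsIntegral ℚ_[p] α := Algebra.IsIntegral.isIntegral α
  haveI : FiniteDimensional ℚ_[p] ℚ_[p]⟮α⟯ := IntermediateField.adjoin.finiteDimensional hint
  letI : NormedSpace ℚ_[p] ℚ_[p]⟮α⟯ :=
    { norm_smul_le := fun c x => by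
        have : ((c • x : ℚ_[p]⟮α⟯) : K) = c • (x : K) := rfl
        change ‖((c • x : ℚ_[p]⟮α⟯) : K)‖ ≤ _
        rw [this, Algebra.smul_def, norm_mul, hext]
        rfl }
  haveI : ProperSpace ℚ_[p]⟮α⟯ := FiniteDimensional.proper ℚ_[p] ℚ_[p]⟮α⟯
  set β : ℕ → ℚ_[p]⟮α⟯ := fun j =>
    ⟨α ^ j, pow_mem (IntermediateField.mem_adjoin_simple_self ℚ_[p] α) j⟩ with hβ
  have hball : ∀ j, β j ∈ Metric.closedBall (0 : ℚ_[p]⟮α⟯) 1 := by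
    intro j
    rw [Metric.mem_closedBall, dist_zero_right]
    show ‖α ^ j‖ ≤ 1
    rw [norm_pow, hα, one_pow]
  obtain ⟨t, _, tfin, hcov⟩ := (isCompact_closedBall (0 : ℚ_[p]⟮α⟯) 1).finite_cover_balls
    (by norm_num : (0:ℝ) < 2⁻¹)
  have hmem : ∀ j : ℕ, ∃ x, x ∈ t ∧ β j ∈ Metric.ball x 2⁻¹ := by
    intro j
    have := hcov (hball j)
    simpa using this
  choose c hct hcb using hmem
  haveI : Finite ↥t := tfin.to_subtype
  obtain ⟨i, j, hij, hcij⟩ := Finite.exists_ne_map_eq_of_infinite (fun j : ℕ => (⟨c j, hct j⟩ : ↥t))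
  have hceq : c i = c j := by simpa using hcij
  have hdist : dist (β i) (β j) < 1 := by
    calc dist (β i) (β j) ≤ dist (β i) (c i) + dist (β j) (c i) := dist_triangle_right _ _ _
    _ < 2⁻¹ + 2⁻¹ := by
        refine add_lt_add (Metric.mem_ball.mp (hcb i)) ?_
        rw [hceq]
        exact Metric.mem_ball.mp (hcb j)
    _ = 1 := by norm_num
  have hdist' : ‖α ^ i - α ^ j‖ < 1 := by
    rw [dist_eq_norm] at hdist
    have h1 : ‖β i - β j‖ = ‖((β i - β j : ℚ_[p]⟮α⟯) : K)‖ := rfl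
    have h2 : ((β i - β j : ℚ_[p]⟮α⟯) : K) = α ^ i - α ^ j := rfl
    rwa [h1, h2] at hdist
  -- wlog i < j
  rcases Nat.lt_or_ge i j with hlt | hge
  · refine ⟨j - i, by omega, ?_⟩
    have hij' : i + (j - i) = j := by omega
    have hfact : α ^ i * (α ^ (j - i) - 1) = -(α ^ i - α ^ j) := by
      calc α ^ i * (α ^ (j - i) - 1) = α ^ (i + (j - i)) - α ^ i := by rw [pow_add]; ring
      _ = -(α ^ i - α ^ j) := by rw [hij']; ring
    have : ‖α ^ i‖ * ‖α ^ (j - i) - 1‖ < 1 := by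
      rw [← norm_mul, hfact, norm_neg]
      exact hdist'
    rwa [norm_pow, hα, one_pow, one_mul] at this
  · have hlt : j < i := by omega
    refine ⟨i - j, by omega, ?_⟩
    have hij' : j + (i - j) = i := by omega
    have hfact : α ^ j * (α ^ (i - j) - 1) = α ^ i - α ^ j := by
      calc α ^ j * (α ^ (i - j) - 1) = α ^ (j + (i - j)) - α ^ j := by rw [pow_add]; ring
      _ = α ^ i - α ^ j := by rw [hij']
    have : ‖α ^ j‖ * ‖α ^ (i - j) - 1‖ < 1 := by
      rw [← norm_mul, hfact]
      exact hdist'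
    rwa [norm_pow, hα, one_pow, one_mul] at this

end Aux3
section Aux4
open Polynomial IsUltrametricDist
variable {p : ℕ} [Fact p.Prime] {K : Type*} [NormedField K] [Algebra ℚ_[p] K]

lemma aux_fixed_mem_range [IsAlgClosed K] [Normal ℚ_[p] K] [Algebra.IsAlgebraic ℚ_[p] K] (x : K)
    (hx : ∀ σ : K ≃ₐ[ℚ_[p]] K, σ x = x) : ∃ z : ℚ_[p], algebraMap ℚ_[p] K z = x := by
  classical
  have hint : IsIntegral ℚ_[p] x := Algebra.IsIntegral.isIntegral x
  have halg : IsAlgebraic ℚ_[p] x := hint.isAlgebraic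
  set P : Polynomial ℚ_[p] := minpoly ℚ_[p] x with hP
  have hPsplits : (P.map (algebraMap ℚ_[p] K)).Splits := IsAlgClosed.splits _
  have hcard : P.natDegree = Multiset.card (P.map (algebraMap ℚ_[p] K)).roots := by
    rw [← hPsplits.natDegree_eq_card_roots, Polynomial.natDegree_map]
  have hall : ∀ y ∈ (P.map (algebraMap ℚ_[p] K)).roots, y = x := by
    intro y hy
    have hev : Polynomial.aeval y P = 0 := by
      have := Polynomial.isRoot_of_mem_roots hy
      rwa [Polynomial.IsRoot, Polynomial.eval_map, ← Polynomial.aeval_def] at this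
    obtain ⟨σ, hσ⟩ := minpoly.exists_algEquiv_of_root (K := ℚ_[p]) (L := K) halg hev
    -- σ y = x, and σ x = x
    have := hx σ
    have hyx : σ y = σ x := by rw [hσ, this]
    exact σ.injective hyx
  have hnodup : (P.map (algebraMap ℚ_[p] K)).roots.Nodup :=
    Polynomial.nodup_roots (Polynomial.Separable.map ((minpoly.irreducible hint).separable))
  have hdeg1 : P.natDegree = 1 := by
    by_contra hne
    have hpos : 0 < P.natDegree := minpoly.natDegree_pos hint
    have h2 : 2 ≤ P.natDegree := by omega
    have hrepl := Multiset.eq_replicate_of_mem hall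
    rw [hrepl] at hnodup
    have hcount := Multiset.nodup_iff_count_le_one.mp hnodup x
    rw [Multiset.count_replicate, if_pos rfl, ← hcard] at hcount
    omega
  have := minpoly.natDegree_eq_one_iff.mp hdeg1
  obtain ⟨z, hz⟩ := this
  exact ⟨z, hz⟩

lemma aux_pl_fixed [IsAlgClosed K] [CharZero K] (f : Polynomial ℤ) (n : ℕ)
    (σ : K ≃ₐ[ℚ_[p]] K) : σ (pierceLehmer K f n) = pierceLehmer K f n := by
  set g : Polynomial K := f.map (Int.castRingHom K) with hg
  have hmap : g.map (σ : K →+* K) = g := by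
    rw [hg, Polynomial.map_map]
    congr 1
    exact RingHom.ext_int _ _
  have hsp : g.Splits := IsAlgClosed.splits g
  have hroots : g.roots.map (σ : K →+* K) = g.roots := by
    conv_rhs => rw [← hmap]
    rw [hsp.roots_map_of_injective (σ : K →+* K).injective]
  have hlead : σ g.leadingCoeff = g.leadingCoeff := by
    conv_rhs => rw [← hmap]
    rw [Polynomial.leadingCoeff_map_of_injective (RingHomClass.toRingHom σ).injective]
    rfl
  rw [pierceLehmer]
  rw [map_mul, map_pow]
  rw [show (f.map (Int.castRingHom K)).leadingCoeff = g.leadingCoeff from rfl]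
  rw [hlead]
  congr 1
  rw [map_multiset_prod]
  rw [Multiset.map_map]
  have : ((σ : K →+* K) ∘ fun α => α ^ n - 1) = (fun α => α ^ n - 1) ∘ (σ : K →+* K) := by
    funext t
    simp [map_pow]
  rw [show (f.map (Int.castRingHom K)).roots = g.roots from rfl]
  calc (g.roots.map (⇑σ ∘ fun α => α ^ n - 1)).prod
      = ((g.roots.map (σ : K →+* K)).map (fun α => α ^ n - 1)).prod := by
        rw [Multiset.map_map]
        congr 1
        apply Multiset.map_congr rfl
        intro t _
        simp
    _ = (g.roots.map (fun α => α ^ n - 1)).prod := by rw [hroots]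

end Aux4
lemma aux_dvd {r : ℕ} {ℓ : Fin r → ℕ} (hℓ : ∀ i, (ℓ i).Prime) (hinj : Function.Injective ℓ)
    {k₀ : ℕ} (k : Fin r → ℕ) (hk : ∀ i, k₀ ≤ k i) {m : ℕ} (hm : 0 < m) (hmle : m ≤ k₀) :
    (m ∣ ∏ i, ℓ i ^ k i ↔ m ∣ ∏ i, ℓ i ^ k₀) := by
  constructor
  · intro hdvd
    have hN0 : (∏ i, ℓ i ^ k₀) ≠ 0 :=
      Finset.prod_ne_zero_iff.mpr fun i _ => pow_ne_zero _ (hℓ i).pos.ne'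
    rw [← Nat.factorization_le_iff_dvd hm.ne' hN0]
    refine (Finsupp.le_iff _ _).mpr fun q hq => ?_
    rw [Nat.support_factorization] at hq
    have hqprime : q.Prime := Nat.prime_of_mem_primeFactors hq
    have hqdvdN : q ∣ ∏ i, ℓ i ^ k i := (Nat.dvd_of_mem_primeFactors hq).trans hdvd
    obtain ⟨i, _, hqi⟩ := hqprime.prime.exists_mem_finset_dvd hqdvdN
    have hqeq : q = ℓ i := (Nat.prime_dvd_prime_iff_eq hqprime (hℓ i)).mp
      (hqprime.dvd_of_dvd_pow hqi)
    have hlt : m.factorization q < m := Nat.factorization_lt q hm.ne'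
    have hval : (∏ i, ℓ i ^ k₀).factorization q = k₀ := by
      rw [Nat.factorization_prod fun i _ => pow_ne_zero _ (hℓ i).pos.ne']
      rw [Finsupp.finset_sum_apply]
      rw [Finset.sum_eq_single i]
      · rw [(hℓ i).factorization_pow, hqeq, Finsupp.single_apply, if_pos rfl]
      · intro b _ hbi
        rw [(hℓ b).factorization_pow, hqeq, Finsupp.single_apply, if_neg]
        exact fun hc => hbi (hinj hc)
      · intro hc
        exact absurd (Finset.mem_univ i) hc
    rw [hval]
    omega
  · intro h
    exact h.trans (Finset.prod_dvd_prod_of_dvd _ _ fun i _ => pow_dvd_pow _ (hk i))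

lemma aux_not_dvd {r : ℕ} {ℓ : Fin r → ℕ} (hℓ : ∀ i, (ℓ i).Prime) {p : ℕ} (pp : p.Prime)
    (hp : ∀ i, p ≠ ℓ i) (k : Fin r → ℕ) : ¬ p ∣ ∏ i, ℓ i ^ k i := by
  have hcop : p.Coprime (∏ i, ℓ i ^ k i) :=
    Nat.Coprime.prod_right fun i _ =>
      ((Nat.coprime_primes pp (hℓ i)).mpr (hp i)).pow_right _
  exact (Nat.Prime.coprime_iff_not_dvd pp).mp hcop
/-- for `f ∈ ℤ[t]` nonzero and not vanishing at roots of unity, distinct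
primes `ℓ_1, …, ℓ_r` and a prime `p ∉ {ℓ_1,…,ℓ_r}`, there exist `ν(f) ∈ ℤ` and `k₀ ∈ ℕ`
such that for every `n = ℓ_1^{k_1} ⋯ ℓ_r^{k_r}` with `min(k_1,…,k_r) ≥ k₀` one has
`ord_p(Δ_n(f)) = μ_p(f)·n + ν(f)`. -/
theorem ordp_pierceLehmer_multi_prime_tower_other_prime
    (r : ℕ) (ℓ : Fin r → ℕ) (hℓ : ∀ i, (ℓ i).Prime) (hinj : Function.Injective ℓ)
    (p : ℕ) [Fact p.Prime] (hp : ∀ i, p ≠ ℓ i)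
    (K : Type*) [NormedField K] [Algebra ℚ_[p] K] [IsAlgClosure ℚ_[p] K]
    (hext : ∀ x : ℚ_[p], ‖algebraMap ℚ_[p] K x‖ = ‖x‖)
    (f : Polynomial ℤ) (hf : f ≠ 0)
    (hru : ∀ ζ : K, IsOfFinOrder ζ → (f.map (Int.castRingHom K)).eval ζ ≠ 0) :
    ∃ (ν : ℤ) (k₀ : ℕ), ∀ k : Fin r → ℕ, (∀ i, k₀ ≤ k i) →
      ordp p (pierceLehmer K f (∏ i, ℓ i ^ k i)) =
        (-(Real.log (mahlerMeasure K f)) / Real.log p) * ((∏ i, ℓ i ^ k i : ℕ) : ℝ) +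
          (ν : ℝ) := by
  classical
  have pp : p.Prime := Fact.out
  haveI : IsAlgClosed K := IsAlgClosure.isAlgClosed ℚ_[p]
  haveI : Algebra.IsAlgebraic ℚ_[p] K := IsAlgClosure.isAlgebraic
  haveI : CharZero K := charZero_of_injective_algebraMap (algebraMap ℚ_[p] K).injective
  haveI : IsUltrametricDist K := aux_ultra hext
  have hplog : Real.log p ≠ 0 := ne_of_gt (Real.log_pos (by exact_mod_cast pp.one_lt))
  set g : Polynomial K := f.map (Int.castRingHom K) with hgdef
  have hg0 : g ≠ 0 := (Polynomial.map_ne_zero_iff Int.cast_injective).mpr hf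
  have ha0 : g.leadingCoeff ≠ 0 := Polynomial.leadingCoeff_ne_zero.mpr hg0
  have hsp : g.Splits := IsAlgClosed.splits g
  have hne : ∀ α ∈ g.roots, ∀ m : ℕ, 0 < m → α ^ m ≠ 1 := by
    intro α hαR m hm hpow
    exact hru α (isOfFinOrder_iff_pow_eq_one.mpr ⟨m, hm, hpow⟩)
      (Polynomial.isRoot_of_mem_roots hαR)
  have hM1 : (1:ℝ) ≤ (g.roots.map fun α => max 1 ‖α‖).prod :=
    Multiset.one_le_prod (by
      intro x hx
      obtain ⟨b, _, rfl⟩ := Multiset.mem_map.mp hx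
      exact le_max_left _ _)
  have hMeq : mahlerMeasure K f = ‖g.leadingCoeff‖ * (g.roots.map fun α => max 1 ‖α‖).prod := rfl
  have hMpos : 0 < mahlerMeasure K f := by
    rw [hMeq]
    have h1 : 0 < ‖g.leadingCoeff‖ := norm_pos_iff.mpr ha0
    nlinarith
  obtain ⟨hNbound, j, hNj⟩ := aux_newton (K := K) g.roots
  obtain ⟨v, hv⟩ : ∃ v : ℤ, mahlerMeasure K f = (p:ℝ) ^ v := by
    have hgj : ‖g.coeff j‖ = mahlerMeasure K f := by
      conv_lhs => rw [hsp.eq_prod_roots]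
      rw [Polynomial.coeff_C_mul, norm_mul, hNj, hMeq]
    have hcj : g.coeff j = ((f.coeff j : ℤ) : K) := by
      rw [hgdef, Polynomial.coeff_map]
      rfl
    have hnormq : ‖g.coeff j‖ = ‖((f.coeff j : ℤ) : ℚ_[p])‖ := by
      rw [hcj, aux_norm_intCast hext]
    have hzne : ((f.coeff j : ℤ) : ℚ_[p]) ≠ 0 := by
      intro h0
      rw [← hgj, hnormq, h0, norm_zero] at hMpos
      exact lt_irrefl _ hMpos
    refine ⟨-(((f.coeff j : ℤ) : ℚ_[p]).valuation), ?_⟩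
    rw [← hgj, hnormq, Padic.norm_eq_zpow_neg_valuation hzne]
  have hlogM : Real.log (mahlerMeasure K f) = (v:ℝ) * Real.log p := by
    rw [hv, Real.log_zpow]
  set m0 : K → ℕ := fun α => sInf {m : ℕ | 0 < m ∧ ‖α ^ m - 1‖ < 1} with hm0def
  set k₀ : ℕ := g.roots.toFinset.sup m0 + 1 with hk₀def
  set N₀ : ℕ := ∏ i, ℓ i ^ k₀ with hN₀def
  set cfun : K → ℝ := fun α => if ‖α‖ = 1 ∧ m0 α ∣ N₀ then ‖α ^ m0 α - 1‖ else 1 with hcdef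
  set Cst : ℝ := (g.roots.map cfun).prod with hCstdef
  have hPLne : ∀ n : ℕ, 0 < n → pierceLehmer K f n ≠ 0 := by
    intro n hn
    rw [pierceLehmer]
    refine mul_ne_zero (pow_ne_zero _ ha0) (Multiset.prod_ne_zero ?_)
    intro h0
    obtain ⟨α, hαR, hα0⟩ := Multiset.mem_map.mp h0
    exact hne α hαR n hn (sub_eq_zero.mp hα0)
  have hkey : ∀ n : ℕ, 0 < n → ¬ p ∣ n → (∀ m : ℕ, 0 < m → m ≤ k₀ → (m ∣ n ↔ m ∣ N₀)) →
      ‖pierceLehmer K f n‖ = mahlerMeasure K f ^ n * Cst := by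
    intro n hn hpn hdvdiff
    have hroot : ∀ α ∈ g.roots, ‖α ^ n - 1‖ = (max 1 ‖α‖) ^ n * cfun α := by
      intro α hαR
      rcases lt_trichotomy ‖α‖ 1 with hlt | heq | hgt
      · have h1 : ‖α ^ n‖ < 1 := by
          rw [norm_pow]; exact pow_lt_one₀ (norm_nonneg _) hlt hn.ne'
        have h2 : ‖α ^ n - 1‖ = 1 := by
          rw [norm_sub_rev, aux_iso (by rw [norm_one]; exact h1), norm_one]
        have h3 : cfun α = 1 := by
          simp only [hcdef]
          exact if_neg (by rintro ⟨h, _⟩; exact absurd h (ne_of_lt hlt))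
        rw [h2, h3, max_eq_left hlt.le, one_pow, mul_one]
      · have hfin : {m : ℕ | 0 < m ∧ ‖α ^ m - 1‖ < 1}.Nonempty := aux_exists_small hext heq
        have hm0eq : m0 α = sInf {m : ℕ | 0 < m ∧ ‖α ^ m - 1‖ < 1} := by rw [hm0def]
        have hform := aux_analysis hext heq hfin hm0eq hn hpn
        have hm0mem : 0 < m0 α ∧ ‖α ^ m0 α - 1‖ < 1 := by
          rw [hm0eq]; exact Nat.sInf_mem hfin
        have hm0le : m0 α ≤ k₀ := by
          have := Finset.le_sup (f := m0) (Multiset.mem_toFinset.mpr hαR)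
          omega
        have hiff := hdvdiff (m0 α) hm0mem.1 hm0le
        rw [hform, heq, max_self, one_pow, one_mul]
        simp only [hcdef]
        by_cases hd : m0 α ∣ N₀
        · rw [if_pos (hiff.mpr hd), if_pos ⟨heq, hd⟩]
        · rw [if_neg (fun hc => hd (hiff.mp hc)), if_neg (by rintro ⟨_, h⟩; exact hd h)]
      · have h1 : (1:ℝ) < ‖α ^ n‖ := by
          rw [norm_pow]; exact one_lt_pow₀ hgt hn.ne'
        have h2 : ‖α ^ n - 1‖ = ‖α‖ ^ n := by
          rw [aux_iso (by rw [norm_one]; exact h1), norm_pow]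
        have h3 : cfun α = 1 := by
          simp only [hcdef]
          exact if_neg (by rintro ⟨h, _⟩; exact absurd h (ne_of_gt hgt))
        rw [h2, h3, max_eq_right hgt.le, mul_one]
    rw [pierceLehmer, norm_mul, norm_pow, aux_norm_msprod, Multiset.map_map]
    have hcong : (g.roots.map ((fun x => ‖x‖) ∘ fun α => α ^ n - 1)).prod =
        (g.roots.map (fun α => (max 1 ‖α‖) ^ n * cfun α)).prod := by
      congr 1
      exact Multiset.map_congr rfl fun α hα => hroot α hα
    rw [hcong, Multiset.prod_map_mul, Multiset.prod_map_pow, hMeq, mul_pow, ← hCstdef]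
    ring
  have hfamily : ∀ k : Fin r → ℕ, (∀ i, k₀ ≤ k i) →
      ‖pierceLehmer K f (∏ i, ℓ i ^ k i)‖ =
        mahlerMeasure K f ^ (∏ i, ℓ i ^ k i) * Cst := by
    intro k hk
    exact hkey _ (Finset.prod_pos fun i _ => pow_pos (hℓ i).pos _)
      (aux_not_dvd hℓ pp hp k) (fun m hm hmle => aux_dvd hℓ hinj k hk hm hmle)
  have hN₀pos : 0 < N₀ := Finset.prod_pos fun i _ => pow_pos (hℓ i).pos _
  have hN₀fam : ‖pierceLehmer K f N₀‖ = mahlerMeasure K f ^ N₀ * Cst :=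
    hfamily (fun _ => k₀) (fun i => le_rfl)
  obtain ⟨w, hwval⟩ : ∃ w : ℤ, ‖pierceLehmer K f N₀‖ = (p:ℝ) ^ w := by
    obtain ⟨z, hz⟩ := aux_fixed_mem_range (p := p) (pierceLehmer K f N₀)
      (fun σ => aux_pl_fixed f N₀ σ)
    have hzne : z ≠ 0 := by
      intro h0
      rw [h0, map_zero] at hz
      exact hPLne N₀ hN₀pos hz.symm
    refine ⟨-z.valuation, ?_⟩
    rw [← hz, hext, Padic.norm_eq_zpow_neg_valuation hzne]
  have hCpos : 0 < Cst := by
    have h1 : 0 < mahlerMeasure K f ^ N₀ := pow_pos hMpos _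
    have h2 : (0:ℝ) < (p:ℝ) ^ (w:ℤ) := zpow_pos (by exact_mod_cast pp.pos) _
    have h3 : mahlerMeasure K f ^ N₀ * Cst = (p:ℝ) ^ (w:ℤ) := by rw [← hN₀fam, hwval]
    nlinarith
  have hlogC : Real.log Cst = ((w:ℝ) - (N₀:ℝ) * (v:ℝ)) * Real.log p := by
    have h3 : mahlerMeasure K f ^ N₀ * Cst = (p:ℝ) ^ (w:ℤ) := by rw [← hN₀fam, hwval]
    have h4 := congrArg Real.log h3
    rw [Real.log_mul (pow_ne_zero _ hMpos.ne') hCpos.ne', Real.log_pow, hlogM,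
      Real.log_zpow] at h4
    nlinarith [h4]
  refine ⟨(N₀ : ℤ) * v - w, k₀, ?_⟩
  intro k hk
  unfold ordp
  rw [hfamily k hk, Real.log_mul (pow_ne_zero _ hMpos.ne') hCpos.ne', Real.log_pow,
    hlogM, hlogC]
  push_cast
  field_simp
  ring
end

section
/- Let p be a prime and let α ∈ ℚ̄_p satisfy |α|_p = 1. Then there exists a unique root of unity ξ ∈ ℚ̄_p whose order is coprime to p and which satisfies |α − ξ|_p < 1; moreover the order of ξ equals the multiplicative order of the image of α in the residue field of the valuation ring of ℚ̄_p. -/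
open IsUltrametricDist Finset

section Aux

variable {K : Type*} [NormedField K]

lemma aux_norm_eq_one_of_pow {x : K} {n : ℕ} (hn : 0 < n) (h : x ^ n = 1) : ‖x‖ = 1 := by
  have h1 : ‖x‖ ^ n = 1 := by rw [← norm_pow, h, norm_one]
  by_contra hne
  rcases lt_or_gt_of_ne hne with hlt | hgt
  · have := pow_lt_one₀ (norm_nonneg x) hlt hn.ne'
    rw [h1] at this; exact lt_irrefl 1 this
  · have := one_lt_pow₀ hgt hn.ne'
    rw [h1] at this; exact lt_irrefl 1 this

variable [IsUltrametricDist K]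

lemma aux_pow_sub_pow {a b : K} (ha : ‖a‖ ≤ 1) (hb : ‖b‖ ≤ 1) (m : ℕ) :
    ‖a ^ m - b ^ m‖ ≤ ‖a - b‖ := by
  rcases Nat.eq_zero_or_pos m with rfl | hm
  · simp
  rw [← geom_sum₂_mul a b m, norm_mul]
  have h1 : ‖∑ i ∈ Finset.range m, a ^ i * b ^ (m - 1 - i)‖ ≤ 1 := by
    apply norm_sum_le_of_forall_le_of_nonneg zero_le_one
    intro i _
    rw [norm_mul, norm_pow, norm_pow]
    exact mul_le_one₀ (pow_le_one₀ (norm_nonneg a) ha) (by positivity)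
      (pow_le_one₀ (norm_nonneg b) hb)
  calc ‖∑ i ∈ Finset.range m, a ^ i * b ^ (m - 1 - i)‖ * ‖a - b‖
      ≤ 1 * ‖a - b‖ := mul_le_mul_of_nonneg_right h1 (norm_nonneg _)
    _ = ‖a - b‖ := one_mul _

lemma aux_rootUnity_eq_one {ζ : K} {d : ℕ} (hd : 0 < d) (hdn : ‖(d : K)‖ = 1)
    (hζ : ζ ^ d = 1) (hlt : ‖ζ - 1‖ < 1) : ζ = 1 := by
  by_contra hne
  have hsum : (∑ i ∈ Finset.range d, ζ ^ i) = 0 := by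
    have h := geom_sum_mul ζ d
    rw [hζ, sub_self] at h
    exact (mul_eq_zero.mp h).resolve_right (sub_ne_zero.mpr hne)
  have hζ1 : ‖ζ‖ ≤ 1 := le_of_eq (aux_norm_eq_one_of_pow hd hζ)
  have hcast : (d : K) = ∑ i ∈ Finset.range d, ((1 : K) - ζ ^ i) := by
    rw [Finset.sum_sub_distrib, hsum, sub_zero, Finset.sum_const, Finset.card_range,
      nsmul_eq_mul, mul_one]
  have hlt2 : ‖(d : K)‖ < 1 := by
    rw [hcast]
    refine lt_of_le_of_lt (norm_sum_le_of_forall_le_of_nonneg (norm_nonneg _) ?_) hlt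
    intro i _
    calc ‖(1 : K) - ζ ^ i‖ = ‖ζ ^ i - 1 ^ i‖ := by rw [norm_sub_rev, one_pow]
      _ ≤ ‖ζ - 1‖ := aux_pow_sub_pow hζ1 (by simp) i
  rw [hdn] at hlt2; exact lt_irrefl 1 hlt2

lemma aux_eq_of_close {p : ℕ} (hp : p.Prime)
    (hnorm1 : ∀ n : ℕ, ¬ p ∣ n → ‖(n : K)‖ = 1)
    {ξ ξ' : K} (h : IsOfFinOrder ξ) (h' : IsOfFinOrder ξ')
    (hcop : (orderOf ξ).Coprime p) (hcop' : (orderOf ξ').Coprime p)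
    (hlt : ‖ξ - ξ'‖ < 1) : ξ = ξ' := by
  have hn : 0 < orderOf ξ := h.orderOf_pos
  have hn' : 0 < orderOf ξ' := h'.orderOf_pos
  have hξ'1 : ‖ξ'‖ = 1 := aux_norm_eq_one_of_pow hn' (pow_orderOf_eq_one ξ')
  have hξ'0 : ξ' ≠ 0 := by intro h0; rw [h0, norm_zero] at hξ'1; norm_num at hξ'1
  set d := orderOf ξ * orderOf ξ' with hdd
  have hd : 0 < d := Nat.mul_pos hn hn'
  have hcd : d.Coprime p := Nat.Coprime.mul hcop hcop'
  have hdn : ‖(d : K)‖ = 1 := hnorm1 d ((hp.coprime_iff_not_dvd).mp hcd.symm)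
  have hζd : (ξ * ξ'⁻¹) ^ d = 1 := by
    rw [mul_pow, inv_pow]
    rw [show ξ ^ d = 1 by rw [hdd, pow_mul, pow_orderOf_eq_one, one_pow]]
    rw [show ξ' ^ d = 1 by rw [hdd, mul_comm, pow_mul, pow_orderOf_eq_one, one_pow]]
    simp
  have hlt2 : ‖ξ * ξ'⁻¹ - 1‖ < 1 := by
    have : ξ * ξ'⁻¹ - 1 = (ξ - ξ') * ξ'⁻¹ := by field_simp
    rw [this, norm_mul, norm_inv, hξ'1, inv_one, mul_one]
    exact hlt
  have := aux_rootUnity_eq_one hd hdn hζd hlt2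
  field_simp at this
  exact this

end Aux

section Aux2

variable {K : Type*} [NormedField K] [IsUltrametricDist K]

lemma aux_norm_sub_le_max (x y : K) : ‖x - y‖ ≤ max ‖x‖ ‖y‖ := by
  simpa [sub_eq_add_neg, norm_neg] using norm_add_le_max x (-y)

lemma aux_p_power {p : ℕ} (hp : p.Prime) (hpnorm : ‖(p : K)‖ < 1)
    (hnat : ∀ n : ℕ, ‖(n : K)‖ ≤ 1) {γ : K} (hγ : ‖γ‖ ≤ 1)
    (h : ‖γ ^ p - 1‖ < 1) : ‖γ - 1‖ < 1 := by
  set t := γ - 1 with ht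
  have ht1 : ‖t‖ ≤ 1 := by
    refine le_trans (aux_norm_sub_le_max γ 1) ?_
    simp [hγ]
  have hchoose : ∀ k : ℕ, k ∈ Finset.range (p - 1) →
      ‖t ^ (k + 1) * ((p.choose (k + 1) : ℕ) : K)‖ ≤ ‖(p : K)‖ := by
    intro k hk
    rw [Finset.mem_range] at hk
    obtain ⟨c, hc⟩ := hp.dvd_choose_self (Nat.succ_ne_zero k) (by omega)
    rw [norm_mul, hc]
    push_cast
    rw [norm_mul]
    calc ‖t ^ (k+1)‖ * (‖(p : K)‖ * ‖(c : K)‖)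
        ≤ 1 * (‖(p : K)‖ * 1) := by
          refine mul_le_mul ?_ ?_ (by positivity) zero_le_one
          · rw [norm_pow]; exact pow_le_one₀ (norm_nonneg t) ht1
          · exact mul_le_mul_of_nonneg_left (hnat c) (norm_nonneg _)
      _ = ‖(p : K)‖ := by ring
  have hexp : t ^ p = (γ ^ p - 1) -
      ∑ k ∈ Finset.range (p - 1), t ^ (k + 1) * ((p.choose (k + 1) : ℕ) : K) := by
    have hγt : γ = t + 1 := by rw [ht]; ring
    have hadd : γ ^ p = ∑ k ∈ Finset.range (p + 1), t ^ k * ((p.choose k : ℕ) : K) := by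
      conv_lhs => rw [hγt, add_pow]
      exact Finset.sum_congr rfl (fun k _ => by rw [one_pow, mul_one])
    have hsplit : ∑ k ∈ Finset.range (p + 1), t ^ k * ((p.choose k : ℕ) : K)
        = (∑ k ∈ Finset.range (p - 1), t ^ (k + 1) * ((p.choose (k + 1) : ℕ) : K))
          + t ^ p + 1 := by
      rw [Finset.sum_range_succ']
      have hpred : p = (p - 1) + 1 := (Nat.succ_pred_eq_of_pos hp.pos).symm
      conv_lhs => rw [show (∑ k ∈ Finset.range p, t ^ (k+1) * ((p.choose (k+1) : ℕ) : K))
        = ∑ k ∈ Finset.range ((p-1)+1), t ^ (k+1) * ((p.choose (k+1) : ℕ) : K) by rw [← hpred]]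
      rw [Finset.sum_range_succ, ← hpred]
      simp [Nat.choose_self]
    rw [hadd, hsplit]
    ring
  have hnormsum : ‖∑ k ∈ Finset.range (p - 1),
      t ^ (k + 1) * ((p.choose (k + 1) : ℕ) : K)‖ ≤ ‖(p : K)‖ :=
    norm_sum_le_of_forall_le_of_nonneg (norm_nonneg _) hchoose
  have htp : ‖t ^ p‖ < 1 := by
    rw [hexp]
    refine lt_of_le_of_lt (aux_norm_sub_le_max _ _) ?_
    rw [max_lt_iff]
    exact ⟨h, lt_of_le_of_lt hnormsum hpnorm⟩
  by_contra hcon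
  push_neg at hcon
  have : (1 : ℝ) ≤ ‖t ^ p‖ := by
    rw [norm_pow]
    exact one_le_pow₀ hcon
  linarith

lemma aux_strip {p : ℕ} (hp : p.Prime) (hpnorm : ‖(p : K)‖ < 1)
    (hnat : ∀ n : ℕ, ‖(n : K)‖ ≤ 1) (s : ℕ) {β : K} (hβ : ‖β‖ ≤ 1)
    (h : ‖β ^ p ^ s - 1‖ < 1) : ‖β - 1‖ < 1 := by
  induction s with
  | zero => simpa using h
  | succ s ih =>
    refine ih ?_
    refine aux_p_power hp hpnorm hnat (by rw [norm_pow]; exact pow_le_one₀ (norm_nonneg β) hβ) ?_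
    rw [← pow_mul, ← pow_succ]
    exact h

end Aux2

lemma aux_one_le_multiset_prod (m : Multiset ℝ) (h : ∀ x ∈ m, 1 ≤ x) : 1 ≤ m.prod := by
  induction m using Multiset.induction with
  | empty => simp
  | cons a s ih =>
    rw [Multiset.prod_cons]
    have ha := h a (Multiset.mem_cons_self a s)
    have hs := ih (fun x hx => h x (Multiset.mem_cons_of_mem hx))
    nlinarith


/-- for `α ∈ ℚ̄_p` with `|α|_p = 1` there is a unique root of unity
`ξ ∈ ℚ̄_p` of order coprime to `p` with `|α - ξ|_p < 1` (the Teichmüller representative);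
moreover the order of any such `ξ` equals the multiplicative order of the reduction of `α`
in the residue field, i.e. for all `m ≥ 1` one has `|α^m - 1|_p < 1` iff `orderOf ξ ∣ m`. -/
theorem existsUnique_teichmueller
    (p : ℕ) [Fact p.Prime]
    (K : Type*) [NormedField K] [Algebra ℚ_[p] K] [IsAlgClosure ℚ_[p] K]
    (hext : ∀ x : ℚ_[p], ‖algebraMap ℚ_[p] K x‖ = ‖x‖)
    (α : K) (hα : ‖α‖ = 1) :
    (∃! ξ : K, IsOfFinOrder ξ ∧ (orderOf ξ).Coprime p ∧ ‖α - ξ‖ < 1) ∧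
    (∀ ξ : K, IsOfFinOrder ξ → (orderOf ξ).Coprime p → ‖α - ξ‖ < 1 →
      ∀ m : ℕ, 0 < m → (‖α ^ m - 1‖ < 1 ↔ orderOf ξ ∣ m)) := by
  have hp : p.Prime := Fact.out
  -- norms of natural numbers
  have hnat : ∀ n : ℕ, ‖(n : K)‖ ≤ 1 := by
    intro n
    rw [← map_natCast (algebraMap ℚ_[p] K) n, hext]
    have : ((n : ℤ) : ℚ_[p]) = (n : ℚ_[p]) := by push_cast; ring
    rw [← this]
    exact Padic.norm_int_le_one _
  haveI : IsUltrametricDist K :=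
    IsUltrametricDist.isUltrametricDist_of_forall_norm_natCast_le_one hnat
  have hpnorm : ‖(p : K)‖ < 1 := by
    rw [← map_natCast (algebraMap ℚ_[p] K) p, hext]
    have : ((p : ℤ) : ℚ_[p]) = (p : ℚ_[p]) := by push_cast; ring
    rw [← this, Padic.norm_intCast_lt_one_iff]
  have hnorm1 : ∀ n : ℕ, ¬ p ∣ n → ‖(n : K)‖ = 1 := by
    intro n hn
    refine le_antisymm (hnat n) ?_
    rcases lt_or_ge ‖(n : K)‖ 1 with hlt | hge
    · exfalso
      rw [← map_natCast (algebraMap ℚ_[p] K) n, hext] at hlt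
      have : ((n : ℤ) : ℚ_[p]) = (n : ℚ_[p]) := by push_cast; ring
      rw [← this, Padic.norm_intCast_lt_one_iff] at hlt
      exact hn (by exact_mod_cast hlt)
    · exact hge
  -- existence of n with p ∤ n and ‖α ^ n - 1‖ < 1
  have hrep0 : ∃ k l : ℕ, k < l ∧ ‖α ^ l - α ^ k‖ < 1 := by
    haveI : Algebra.IsAlgebraic ℚ_[p] K := IsAlgClosure.isAlgebraic
    have hint : IsIntegral ℚ_[p] α := (Algebra.IsAlgebraic.isAlgebraic α).isIntegral
    letI : NormedSpace ℚ_[p] K :=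
      { norm_smul_le := fun c x => by
          rw [Algebra.smul_def, norm_mul, hext] }
    set V : Submodule ℚ_[p] K := Subalgebra.toSubmodule (Algebra.adjoin ℚ_[p] {α}) with hV
    haveI : FiniteDimensional ℚ_[p] V := Module.Finite.iff_fg.mpr hint.fg_adjoin_singleton
    haveI : ProperSpace V := FiniteDimensional.proper ℚ_[p] V
    have hmem : ∀ k : ℕ, α ^ k ∈ V := fun k =>
      pow_mem (Algebra.subset_adjoin (Set.mem_singleton α)) k
    set f : ℕ → V := fun k => ⟨α ^ k, hmem k⟩ with hf
    have hfball : ∀ k, f k ∈ Metric.closedBall (0 : V) 1 := by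
      intro k
      rw [Metric.mem_closedBall, dist_zero_right]
      show ‖(α ^ k : K)‖ ≤ 1
      rw [norm_pow, hα, one_pow]
    obtain ⟨t, ht⟩ := (isCompact_closedBall (0 : V) 1).elim_finite_subcover
      (fun c : V => Metric.ball c 1) (fun c => Metric.isOpen_ball)
      (fun x _ => Set.mem_iUnion.mpr ⟨x, Metric.mem_ball_self one_pos⟩)
    have hc : ∀ k : ℕ, ∃ c ∈ t, f k ∈ Metric.ball c 1 := by
      intro k
      have := ht (hfball k)
      simpa using this
    choose c hct hcb using hc
    have : ∃ k l : ℕ, k ≠ l ∧ (⟨c k, hct k⟩ : t) = ⟨c l, hct l⟩ :=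
      Finite.exists_ne_map_eq_of_infinite _
    obtain ⟨k, l, hkl, hceq⟩ := this
    have hceq' : c k = c l := by simpa using hceq
    have hdist : ‖α ^ l - α ^ k‖ < 1 := by
      have h1 : ‖α ^ k - (c k : K)‖ < 1 := by
        have := hcb k
        rw [Metric.mem_ball, dist_eq_norm] at this
        exact this
      have h2 : ‖α ^ l - (c k : K)‖ < 1 := by
        have := hcb l
        rw [Metric.mem_ball, dist_eq_norm, ← hceq'] at this
        exact this
      have : α ^ l - α ^ k = (α ^ l - (c k : K)) - (α ^ k - (c k : K)) := by ring
      rw [this]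
      exact lt_of_le_of_lt (aux_norm_sub_le_max _ _) (max_lt h2 h1)
    rcases hkl.lt_or_gt with h | h
    · exact ⟨k, l, h, hdist⟩
    · exact ⟨l, k, h, by rwa [norm_sub_rev] at hdist⟩
  have hrep : ∃ n : ℕ, 0 < n ∧ ¬ p ∣ n ∧ ‖α ^ n - 1‖ < 1 := by
    obtain ⟨k, l, hkl, hd⟩ := hrep0
    set n₀ := l - k with hn₀
    have hn₀pos : 0 < n₀ := Nat.sub_pos_of_lt hkl
    have hpown : ‖α ^ n₀ - 1‖ < 1 := by
      have hid : α ^ k * (α ^ n₀ - 1) = α ^ l - α ^ k := by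
        rw [mul_sub, ← pow_add, Nat.add_sub_cancel' hkl.le, mul_one]
      have := congrArg norm hid
      rw [norm_mul, norm_pow, hα, one_pow, one_mul] at this
      rw [this]
      exact hd
    refine ⟨ordCompl[p] n₀, Nat.ordCompl_pos p hn₀pos.ne', Nat.not_dvd_ordCompl hp hn₀pos.ne', ?_⟩
    refine aux_strip hp hpnorm hnat (n₀.factorization p)
      (by rw [norm_pow, hα, one_pow]) ?_
    have hmm : ordCompl[p] n₀ * p ^ (n₀.factorization p) = n₀ := by
      rw [mul_comm]; exact Nat.ordProj_mul_ordCompl_eq_self n₀ p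
    rw [← pow_mul, hmm]
    exact hpown
  obtain ⟨n, hn0, hnp, hαn⟩ := hrep
  -- extract a root of unity close to α
  have hξex : ∃ ξ : K, ξ ^ n = 1 ∧ ‖α - ξ‖ < 1 := by
    set Q : Polynomial K := Polynomial.X ^ n - Polynomial.C 1 with hQdef
    have hQmonic : Q.Monic := Polynomial.monic_X_pow_sub_C 1 hn0.ne'
    haveI : IsAlgClosed K := IsAlgClosure.isAlgClosed ℚ_[p]
    have hQsplits : Q.Splits := IsAlgClosed.splits Q
    have hQ : Q = (Q.roots.map fun a => Polynomial.X - Polynomial.C a).prod :=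
      hQsplits.eq_prod_roots_of_monic hQmonic
    have hroots : ∀ r ∈ Q.roots, r ^ n = 1 := by
      intro r hr
      have hr0 : Q.eval r = 0 := (Polynomial.isRoot_of_mem_roots hr)
      rw [hQdef] at hr0
      simp only [Polynomial.eval_sub, Polynomial.eval_pow, Polynomial.eval_X,
        Polynomial.eval_C] at hr0
      exact sub_eq_zero.mp hr0
    have heval : α ^ n - 1 = (Q.roots.map fun r => α - r).prod := by
      have h1 : Q.eval α = α ^ n - 1 := by
        rw [hQdef]
        simp
      rw [← h1]
      conv_lhs => rw [hQ]
      rw [Polynomial.eval_multiset_prod, Multiset.map_map]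
      congr 1
      apply Multiset.map_congr rfl
      intro r _
      simp
    by_contra hcon
    push_neg at hcon
    have hge : ∀ r ∈ Q.roots, (1:ℝ) ≤ ‖α - r‖ := by
      intro r hr
      exact hcon r (hroots r hr)
    have h1le : (1:ℝ) ≤ ‖α ^ n - 1‖ := by
      rw [heval]
      have hhom : ‖(Q.roots.map fun r => α - r).prod‖
          = ((Q.roots.map fun r => α - r).map norm).prod := by
        exact (Multiset.prod_hom _ (normHom (α := K)).toMonoidHom).symm
      rw [hhom, Multiset.map_map]
      refine aux_one_le_multiset_prod _ ?_
      intro x hx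
      rw [Multiset.mem_map] at hx
      obtain ⟨r, hr, rfl⟩ := hx
      exact hge r hr
    linarith
  obtain ⟨ξ, hξn, hξclose⟩ := hξex
  have hξfin : IsOfFinOrder ξ := isOfFinOrder_iff_pow_eq_one.mpr ⟨n, hn0, hξn⟩
  have hξcop : (orderOf ξ).Coprime p :=
    Nat.Coprime.coprime_dvd_left (orderOf_dvd_of_pow_eq_one hξn)
      ((hp.coprime_iff_not_dvd.mpr hnp).symm)
  -- norm ≤ 1 for any finite-order element
  have hfin_norm : ∀ ζ : K, IsOfFinOrder ζ → ‖ζ‖ = 1 := fun ζ hζ =>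
    aux_norm_eq_one_of_pow hζ.orderOf_pos (pow_orderOf_eq_one ζ)
  constructor
  · refine ⟨ξ, ⟨hξfin, hξcop, hξclose⟩, ?_⟩
    intro y ⟨hyfin, hycop, hyclose⟩
    refine aux_eq_of_close hp hnorm1 hyfin hξfin hycop hξcop ?_
    have : y - ξ = (α - ξ) - (α - y) := by ring
    rw [this]
    exact lt_of_le_of_lt (aux_norm_sub_le_max _ _) (max_lt hξclose hyclose)
  · intro ζ hζfin hζcop hζclose m hm
    have hζ1 : ‖ζ‖ = 1 := hfin_norm ζ hζfin
    have hpowclose : ‖α ^ m - ζ ^ m‖ < 1 :=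
      lt_of_le_of_lt (aux_pow_sub_pow (le_of_eq hα) (le_of_eq hζ1) m) hζclose
    constructor
    · intro h1
      have hζm1 : ‖ζ ^ m - 1‖ < 1 := by
        have : ζ ^ m - 1 = (α ^ m - 1) - (α ^ m - ζ ^ m) := by ring
        rw [this]
        exact lt_of_le_of_lt (aux_norm_sub_le_max _ _) (max_lt h1 hpowclose)
      have : ζ ^ m = 1 := by
        refine aux_eq_of_close hp hnorm1 (hζfin.pow) IsOfFinOrder.one ?_ ?_ hζm1
        · exact Nat.Coprime.coprime_dvd_left (orderOf_pow_dvd m) hζcop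
        · simp [Nat.coprime_one_left]
      exact orderOf_dvd_of_pow_eq_one this
    · intro hdvd
      have hζm : ζ ^ m = 1 := orderOf_dvd_iff_pow_eq_one.mp hdvd
      have : α ^ m - 1 = α ^ m - ζ ^ m := by rw [hζm]
      rw [this]
      exact hpowclose
end

section
/- Let f ∈ ℤ[t] be a nonzero polynomial having no root on the unit circle {z ∈ ℂ : |z| = 1}. Then Δ_n(f) ≠ 0 for all n ∈ ℕ and |Δ_n(f)| / M_∞(f)^n → 1 as n → ∞. -/
open Polynomial Filter

private lemma PL_tendsto_multiset_prod (s : Multiset ℂ) (g : ℂ → ℕ → ℝ)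
    (h : ∀ α ∈ s, Tendsto (g α) atTop (nhds 1)) :
    Tendsto (fun n => (s.map (fun α => g α n)).prod) atTop (nhds 1) := by
  induction s using Multiset.induction_on with
  | empty => simpa using (tendsto_const_nhds : Tendsto (fun _ : ℕ => (1:ℝ)) atTop (nhds 1))
  | cons a s ih =>
    simp only [Multiset.map_cons, Multiset.prod_cons]
    have := (h a (Multiset.mem_cons_self a s)).mul
      (ih fun α hα => h α (Multiset.mem_cons_of_mem hα))
    simpa using this

private lemma tendsto_root (α : ℂ) (hα : ‖α‖ ≠ 1) :
    Tendsto (fun n : ℕ => ‖α ^ n - 1‖ / (max 1 ‖α‖) ^ n) atTop (nhds 1) := by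
  rcases lt_or_gt_of_ne hα with h | h
  · have hmax : max 1 ‖α‖ = 1 := max_eq_left h.le
    simp only [hmax, one_pow, div_one]
    have h0 : Tendsto (fun n : ℕ => α ^ n) atTop (nhds 0) :=
      tendsto_pow_atTop_nhds_zero_of_norm_lt_one h
    have h1 : Tendsto (fun n : ℕ => α ^ n - 1) atTop (nhds (0 - 1)) :=
      h0.sub tendsto_const_nhds
    simpa using h1.norm
  · have hmax : max 1 ‖α‖ = ‖α‖ := max_eq_right h.le
    have hα0 : α ≠ 0 := by
      intro h0
      rw [h0, norm_zero] at h
      linarith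
    have key : ∀ n : ℕ, ‖α ^ n - 1‖ / (max 1 ‖α‖) ^ n = ‖1 - (α⁻¹) ^ n‖ := by
      intro n
      rw [hmax, ← norm_pow, ← norm_div]
      congr 1
      field_simp
      rw [one_div, mul_sub, mul_one, ← mul_pow, mul_inv_cancel₀ hα0, one_pow]
    simp only [key]
    have hinv : ‖α⁻¹‖ < 1 := by
      rw [norm_inv]
      exact inv_lt_one_of_one_lt₀ h
    have h0 : Tendsto (fun n : ℕ => (α⁻¹) ^ n) atTop (nhds 0) :=
      tendsto_pow_atTop_nhds_zero_of_norm_lt_one hinv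
    have h1 : Tendsto (fun n : ℕ => 1 - (α⁻¹) ^ n) atTop (nhds (1 - 0)) :=
      tendsto_const_nhds.sub h0
    simpa using h1.norm

private lemma prod_map_div (s : Multiset ℂ) (f g : ℂ → ℝ) :
    (s.map f).prod / (s.map g).prod = (s.map (fun a => f a / g a)).prod := by
  induction s using Multiset.induction_on with
  | empty => simp
  | cons a s ih =>
    simp only [Multiset.map_cons, Multiset.prod_cons, ← ih, div_mul_div_comm]

private lemma norm_multiset_prod' (s : Multiset ℂ) :
    ‖s.prod‖ = (s.map (fun a => ‖a‖)).prod := by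
  induction s using Multiset.induction_on with
  | empty => simp
  | cons a s ih => simp [norm_mul, ih]

private lemma prod_map_pow' (s : Multiset ℂ) (g : ℂ → ℝ) (n : ℕ) :
    ((s.map g).prod) ^ n = (s.map (fun a => g a ^ n)).prod := by
  induction s using Multiset.induction_on with
  | empty => simp
  | cons a s ih => simp [mul_pow, ih]

/-- if a nonzero `f ∈ ℤ[t]` has no root on the complex unit circle, then
`Δ_n(f) ≠ 0` for all `n ≥ 1` and `|Δ_n(f)| / M_∞(f)^n → 1` as `n → ∞`. -/
theorem abs_pierceLehmer_asymptotic
    (f : Polynomial ℤ) (hf : f ≠ 0)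
    (hcirc : ∀ z : ℂ, ‖z‖ = 1 → (f.map (Int.castRingHom ℂ)).eval z ≠ 0) :
    (∀ n : ℕ, 0 < n → pierceLehmer ℂ f n ≠ 0) ∧
    Tendsto (fun n : ℕ => ‖pierceLehmer ℂ f n‖ / mahlerMeasure ℂ f ^ n) atTop (nhds 1) := by
  set F := f.map (Int.castRingHom ℂ) with hFdef
  have hF : F ≠ 0 := by
    rw [hFdef, Ne, Polynomial.map_eq_zero_iff]
    · exact hf
    · exact Int.cast_injective
  have hlc : F.leadingCoeff ≠ 0 := leadingCoeff_ne_zero.mpr hF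
  have hroots : ∀ α ∈ F.roots, ‖α‖ ≠ 1 := by
    intro α hα h1
    have := (Polynomial.mem_roots hF).mp hα
    exact hcirc α h1 this
  constructor
  · intro n hn
    unfold pierceLehmer
    rw [← hFdef]
    apply mul_ne_zero (pow_ne_zero _ hlc)
    apply Multiset.prod_ne_zero
    rw [Multiset.mem_map]
    rintro ⟨α, hα, heq⟩
    have h1 : α ^ n = 1 := by
      have := sub_eq_zero.mp heq
      linear_combination this
    have : ‖α ^ n‖ = 1 := by rw [h1, norm_one]
    rw [norm_pow] at this
    rcases lt_or_gt_of_ne (hroots α hα) with h | h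
    · have : ‖α‖ ^ n < 1 := pow_lt_one₀ (norm_nonneg _) h hn.ne'
      linarith
    · have : 1 < ‖α‖ ^ n := one_lt_pow₀ h hn.ne'
      linarith
  · have heq : (fun n : ℕ => ‖pierceLehmer ℂ f n‖ / mahlerMeasure ℂ f ^ n) =
        fun n : ℕ => (F.roots.map (fun α => ‖α ^ n - 1‖ / (max 1 ‖α‖) ^ n)).prod := by
      funext n
      unfold pierceLehmer _root_.mahlerMeasure
      rw [← hFdef, norm_mul, norm_pow, norm_multiset_prod', Multiset.map_map,
        mul_pow, prod_map_pow' F.roots (fun α => max 1 ‖α‖) n,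
        mul_div_mul_comm, div_self (pow_ne_zero n (norm_ne_zero_iff.mpr hlc)), one_mul,
        prod_map_div]
      rfl
    rw [heq]
    exact PL_tendsto_multiset_prod _ _ (fun α hα => tendsto_root α (hroots α hα))
end

section
/- Let β_1 = (−3 − √5)/2 and β_2 = (−3 + √5)/2 be the two complex roots of the polynomial t² + 3t + 1. Then for every n ≥ 1 one has (β_1^n − 1)(β_2^n − 1) = (−1)^{n+1} · 5 · F_n², where F_n denotes the n-th Fibonacci number; equivalently, Res(t² + 3t + 1, t^n − 1) = (−1)^{n+1} · 5 · F_n². -/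
lemma fib_real (n : ℕ) :
    ((((-3 - Real.sqrt 5) / 2 : ℝ)) ^ n - 1) * ((((-3 + Real.sqrt 5) / 2 : ℝ)) ^ n - 1) =
      (-1) ^ (n + 1) * 5 * (Nat.fib n : ℝ) ^ 2 := by
  have hs : Real.sqrt 5 ^ 2 = 5 := Real.sq_sqrt (by norm_num)
  have hsne : Real.sqrt 5 ≠ 0 := by positivity
  have h1 : (-3 - Real.sqrt 5) / 2 = -(Real.goldenRatio ^ 2) := by
    unfold Real.goldenRatio; linear_combination hs / 4
  have h2 : (-3 + Real.sqrt 5) / 2 = -(Real.goldenConj ^ 2) := by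
    unfold Real.goldenConj; linear_combination hs / 4
  rw [h1, h2, Real.coe_fib_eq]
  have hab : Real.goldenRatio ^ n * Real.goldenConj ^ n = (-1 : ℝ) ^ n := by
    rw [← mul_pow, Real.goldenRatio_mul_goldenConj]
  have he : ((-1 : ℝ) ^ n) ^ 2 = 1 := by
    rw [← pow_mul, mul_comm, pow_mul]; norm_num
  have hnp1 : (-1 : ℝ) ^ (n + 1) = -(-1 : ℝ) ^ n := by rw [pow_succ]; ring
  rw [neg_pow (Real.goldenRatio ^ 2), neg_pow (Real.goldenConj ^ 2), ← pow_mul, ← pow_mul,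
    mul_comm 2 n, pow_mul, pow_mul, hnp1]
  set a := Real.goldenRatio ^ n
  set b := Real.goldenConj ^ n
  set e := (-1 : ℝ) ^ n
  rw [div_pow, hs]
  linear_combination (e ^ 2 * (a * b + e) - 2 * e) * hab + (e ^ 2 - 1) * he

/-- with `β₁ = (-3 - √5)/2` and `β₂ = (-3 + √5)/2` the two complex roots of
`t² + 3t + 1`, one has `(β₁^n - 1)(β₂^n - 1) = (-1)^{n+1} · 5 · F_n²` for every `n ≥ 1`,
where `F_n` is the `n`-th Fibonacci number; this product equals `Res(t² + 3t + 1, tⁿ - 1)`. -/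
theorem fibonacci_pierceLehmer (n : ℕ) (hn : 1 ≤ n) :
    ((((-3 - Real.sqrt 5) / 2 : ℝ) : ℂ) ^ n - 1) * ((((-3 + Real.sqrt 5) / 2 : ℝ) : ℂ) ^ n - 1) =
      (-1) ^ (n + 1) * 5 * (Nat.fib n : ℂ) ^ 2 := by
  exact_mod_cast congrArg (Complex.ofReal) (fib_real n)
end

section
/- For every integer n ≥ 1, the 5-adic valuation of the n-th Fibonacci number equals the 5-adic valuation of n: ord_5(F_n) = ord_5(n). -/
open Nat

/-- Cassini-type identity. -/
lemma cassini_fib (m : ℕ) :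
    ((Nat.fib (m + 1) : ℤ))^2 - Nat.fib (m + 1) * Nat.fib m - (Nat.fib m : ℤ)^2 = (-1)^m := by
  induction m with
  | zero => simp
  | succ k ih =>
    have hb : (Nat.fib (k + 2) : ℤ) = Nat.fib k + Nat.fib (k + 1) := by
      exact_mod_cast congrArg (Nat.cast : ℕ → ℤ) (Nat.fib_add_two (n := k))
    rw [pow_succ (-1 : ℤ) k]
    show ((Nat.fib (k + 2) : ℤ))^2 - Nat.fib (k + 2) * Nat.fib (k + 1)
        - (Nat.fib (k + 1) : ℤ)^2 = (-1)^k * -1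
    rw [hb]
    linear_combination -ih

/-- The quintupling identity for Fibonacci numbers, over ℤ. -/
lemma fib_five_mul (k : ℕ) :
    (Nat.fib (5 * (k + 1)) : ℤ) =
      25 * (Nat.fib (k + 1) : ℤ)^5 + 25 * (-1)^(k + 1) * (Nat.fib (k + 1) : ℤ)^3
        + 5 * (Nat.fib (k + 1) : ℤ) := by
  set C : ℤ := (Nat.fib k : ℤ) with hC
  set A : ℤ := (Nat.fib (k + 1) : ℤ) with hA
  set B : ℤ := (Nat.fib (k + 2) : ℤ) with hB
  have hb : B = C + A := by
    rw [hB, hC, hA]; exact_mod_cast congrArg (Nat.cast : ℕ → ℤ) (Nat.fib_add_two (n := k))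
  -- fib (2k+1) = C^2 + A^2
  have h0 : (Nat.fib (2 * k + 1) : ℤ) = C * C + A * A := by
    rw [show 2 * k + 1 = k + k + 1 by ring, Nat.fib_add]; push_cast; ring
  -- fib (2k+2) = C*A + A*B
  have h1 : (Nat.fib (2 * k + 2) : ℤ) = C * A + A * B := by
    rw [show 2 * k + 2 = k + (k + 1) + 1 by ring, Nat.fib_add]; push_cast; ring
  -- fib (2k+3) = A^2 + B^2
  have h2 : (Nat.fib (2 * k + 3) : ℤ) = A * A + B * B := by
    rw [show 2 * k + 3 = (k + 1) + (k + 1) + 1 by ring, Nat.fib_add]; push_cast; ring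
  -- fib (4k+4)
  have h3 : (Nat.fib (4 * k + 4) : ℤ) =
      (Nat.fib (2 * k + 1) : ℤ) * (Nat.fib (2 * k + 2) : ℤ)
        + (Nat.fib (2 * k + 2) : ℤ) * (Nat.fib (2 * k + 3) : ℤ) := by
    rw [show 4 * k + 4 = (2 * k + 1) + (2 * k + 2) + 1 by ring, Nat.fib_add]; push_cast; ring
  -- fib (4k+5)
  have h4 : (Nat.fib (4 * k + 5) : ℤ) =
      (Nat.fib (2 * k + 2) : ℤ) * (Nat.fib (2 * k + 2) : ℤ)
        + (Nat.fib (2 * k + 3) : ℤ) * (Nat.fib (2 * k + 3) : ℤ) := by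
    rw [show 4 * k + 5 = (2 * k + 2) + (2 * k + 2) + 1 by ring, Nat.fib_add]; push_cast; ring
  -- fib (5k+5)
  have h5 : (Nat.fib (5 * (k + 1)) : ℤ) =
      C * (Nat.fib (4 * k + 4) : ℤ) + A * (Nat.fib (4 * k + 5) : ℤ) := by
    rw [show 5 * (k + 1) = k + (4 * k + 4) + 1 by ring, Nat.fib_add]; push_cast; ring
  have hD : B^2 - A * B - A^2 = (-1 : ℤ)^(k + 1) := by
    have h := cassini_fib (k + 1)
    rw [show k + 1 + 1 = k + 2 by omega, ← hB, ← hA] at h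
    linarith [h, mul_comm A B]
  have he : ((-1 : ℤ)^(k + 1))^2 = 1 := by
    rw [← pow_mul, mul_comm, pow_mul]; norm_num
  rw [h5, h3, h4, h0, h1, h2]
  set e : ℤ := (-1 : ℤ)^(k + 1) with hee
  rw [hb] at hD ⊢
  linear_combination (25 * A^3 + 5 * A * (((C + A)^2 - A * (C + A) - A^2) + e)) * hD
      + 5 * A * he

/-- the 5-adic valuation of the `n`-th Fibonacci number equals the 5-adic
valuation of `n`, for every `n ≥ 1`. -/
theorem padicValNat_five_fib (n : ℕ) (hn : 1 ≤ n) :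
    padicValNat 5 (Nat.fib n) = padicValNat 5 n := by
  have hp : Nat.Prime 5 := by norm_num
  haveI : Fact (Nat.Prime 5) := ⟨hp⟩
  induction n using Nat.strong_induction_on with
  | _ n ih =>
    by_cases h5 : 5 ∣ n
    · obtain ⟨m, rfl⟩ := h5
      have hm : 1 ≤ m := by omega
      obtain ⟨k, hk⟩ := Nat.exists_eq_add_of_le hm
      have hdvd : Nat.fib m ∣ Nat.fib (5 * m) := Nat.fib_dvd m (5 * m) ⟨5, by ring⟩
      obtain ⟨c, hc⟩ := hdvd
      have hfm : Nat.fib m ≠ 0 := by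
        have := Nat.fib_pos.mpr (by omega : 0 < m); omega
      -- identify c over ℤ
      have hid : (Nat.fib (5 * m) : ℤ) =
          (Nat.fib m : ℤ) * (25 * (Nat.fib m : ℤ)^4 + 25 * (-1)^m * (Nat.fib m : ℤ)^2 + 5) := by
        have := fib_five_mul k
        rw [show k + 1 = m by omega] at this
        rw [this]; ring
      have hcz : (c : ℤ) = 25 * (Nat.fib m : ℤ)^4 + 25 * (-1)^m * (Nat.fib m : ℤ)^2 + 5 := by
        have h1 : (Nat.fib (5 * m) : ℤ) = (Nat.fib m : ℤ) * c := by exact_mod_cast congrArg (Nat.cast : ℕ → ℤ) hc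
        have h2 : (Nat.fib m : ℤ) ≠ 0 := by exact_mod_cast hfm
        have := h1.symm.trans hid
        exact mul_left_cancel₀ h2 this
      have hc0 : c ≠ 0 := by
        intro h; rw [h] at hcz; simp at hcz
        have hx : (0 : ℤ) ≤ (Nat.fib m : ℤ)^2 := sq_nonneg _
        have hge : (1 : ℤ) ≤ (Nat.fib m : ℤ)^2 := by
          have h1 : 1 ≤ Nat.fib m := Nat.one_le_iff_ne_zero.mpr hfm
          have h2 : (1 : ℤ) ≤ (Nat.fib m : ℤ) := by exact_mod_cast h1
          nlinarith
        rcases Nat.even_or_odd m with hpar | hpar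
        · rw [hpar.neg_one_pow] at hcz; nlinarith
        · rw [hpar.neg_one_pow] at hcz
          nlinarith [mul_nonneg (sub_nonneg.mpr hge) hx]
      -- 5 ∣ c
      have hdc : (5 : ℕ) ∣ c := by
        have : (5 : ℤ) ∣ (c : ℤ) := ⟨5 * (Nat.fib m : ℤ)^4 + 5 * (-1)^m * (Nat.fib m : ℤ)^2 + 1,
          by rw [hcz]; ring⟩
        exact_mod_cast this
      -- ¬ 25 ∣ c
      have hnd : ¬ (25 : ℕ) ∣ c := by
        intro h
        have h25 : (25 : ℤ) ∣ (c : ℤ) := by exact_mod_cast h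
        have : (25 : ℤ) ∣ 5 := by
          have h26 : (25 : ℤ) ∣ (c : ℤ) - 25 * ((Nat.fib m : ℤ)^4 + (-1)^m * (Nat.fib m : ℤ)^2) :=
            dvd_sub h25 (Dvd.intro _ rfl)
          have heq : (c : ℤ) - 25 * ((Nat.fib m : ℤ)^4 + (-1)^m * (Nat.fib m : ℤ)^2) = 5 := by
            rw [hcz]; ring
          rwa [heq] at h26
        norm_num at this
      have hvc : padicValNat 5 c = 1 := by
        apply le_antisymm
        · by_contra h
          have h2 : 2 ≤ padicValNat 5 c := by omega
          have : (5 : ℕ)^2 ∣ c := (padicValNat_dvd_iff_le hc0).mpr h2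
          norm_num at this
          exact hnd this
        · have : (5 : ℕ)^1 ∣ c := by simpa using hdc
          exact (padicValNat_dvd_iff_le hc0).mp this
      have hvm : padicValNat 5 (Nat.fib m) = padicValNat 5 m := ih m (by omega) hm
      rw [hc, padicValNat.mul hfm hc0, hvc, hvm,
        padicValNat.mul (by norm_num) (by omega), padicValNat.self (by norm_num)]
      omega
    · have hf : ¬ (5 : ℕ) ∣ Nat.fib n := by
        intro hd
        have h1 : (5 : ℕ) ∣ Nat.gcd (Nat.fib 5) (Nat.fib n) :=
          Nat.dvd_gcd (by norm_num [Nat.fib]) hd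
        rw [← Nat.fib_gcd] at h1
        have hg : Nat.gcd 5 n = 1 := (Nat.Prime.coprime_iff_not_dvd hp).mpr h5
        rw [hg] at h1
        simp [Nat.fib_one] at h1
      rw [padicValNat.eq_zero_of_not_dvd hf, padicValNat.eq_zero_of_not_dvd h5]
end

section
/- For every integer n ≥ 1, the 2-adic valuation of the n-th Fibonacci number is given by: ord_2(F_n) = 0 if n ≡ 1 or 2 (mod 3); ord_2(F_n) = 1 if n ≡ 3 (mod 6); and ord_2(F_n) = ord_2(n) + 2 if n ≡ 0 (mod 6). -/
open Nat

private lemma fib_mod_two (n : ℕ) : Nat.fib n % 2 = Nat.fib (n % 3) % 2 := by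
  induction n using Nat.strong_induction_on with
  | _ n ih =>
    rcases lt_or_ge n 3 with h | h
    · rw [Nat.mod_eq_of_lt h]
    · obtain ⟨m, rfl⟩ : ∃ m, n = m + 3 := ⟨n - 3, by omega⟩
      have h1 : Nat.fib (m + 3) = Nat.fib m * Nat.fib 2 + Nat.fib (m+1) * Nat.fib 3 :=
        Nat.fib_add m 2
      have h2 := ih m (by omega)
      have h3 : (m + 3) % 3 = m % 3 := by omega
      have e2 : Nat.fib 2 = 1 := by decide
      have e3 : Nat.fib 3 = 2 := by decide
      rw [e2, e3] at h1
      rw [h3]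
      omega

private lemma fib_mod_four (n : ℕ) : Nat.fib n % 4 = Nat.fib (n % 6) % 4 := by
  induction n using Nat.strong_induction_on with
  | _ n ih =>
    rcases lt_or_ge n 6 with h | h
    · rw [Nat.mod_eq_of_lt h]
    · obtain ⟨m, rfl⟩ : ∃ m, n = m + 6 := ⟨n - 6, by omega⟩
      have h1 : Nat.fib (m + 6) = Nat.fib m * Nat.fib 5 + Nat.fib (m+1) * Nat.fib 6 :=
        Nat.fib_add m 5
      have h2 := ih m (by omega)
      have h3 : (m + 6) % 6 = m % 6 := by omega
      have h5 : Nat.fib 5 = 5 := by decide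
      have h6 : Nat.fib 6 = 8 := by decide
      rw [h5, h6] at h1
      rw [h3]
      omega

private lemma fib_mod_eight (n : ℕ) : Nat.fib n % 8 = Nat.fib (n % 12) % 8 := by
  induction n using Nat.strong_induction_on with
  | _ n ih =>
    rcases lt_or_ge n 12 with h | h
    · rw [Nat.mod_eq_of_lt h]
    · obtain ⟨m, rfl⟩ : ∃ m, n = m + 12 := ⟨n - 12, by omega⟩
      have h1 : Nat.fib (m + 12) = Nat.fib m * Nat.fib 11 + Nat.fib (m+1) * Nat.fib 12 :=
        Nat.fib_add m 11
      have h2 := ih m (by omega)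
      have h3 : (m + 12) % 12 = m % 12 := by omega
      have h5 : Nat.fib 11 = 89 := by decide
      have h6 : Nat.fib 12 = 144 := by decide
      rw [h5, h6] at h1
      rw [h3]
      omega

private lemma val_of_odd {m : ℕ} (h : m % 2 = 1) : padicValNat 2 m = 0 :=
  padicValNat.eq_zero_of_not_dvd (by omega)

private lemma val_one {m : ℕ} (h : m % 4 = 2) : padicValNat 2 m = 1 := by
  obtain ⟨k, rfl⟩ : ∃ k, m = 2 * k := ⟨m / 2, by omega⟩
  have hk : k % 2 = 1 := by omega
  rw [padicValNat.mul (by norm_num) (by omega), padicValNat.self (by norm_num),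
    val_of_odd hk]

private lemma val_two {m : ℕ} (h : m % 8 = 4) : padicValNat 2 m = 2 := by
  obtain ⟨k, rfl⟩ : ∃ k, m = 4 * k := ⟨m / 4, by omega⟩
  have hk : k % 2 = 1 := by omega
  have h4 : (4 : ℕ) = 2 ^ 2 := by norm_num
  rw [padicValNat.mul (by norm_num) (by omega), val_of_odd hk, h4,
    padicValNat.prime_pow]

/-- Lucas-number factor valuation when `m ≡ 3 [MOD 6]`. -/
private lemma lucas_val_of_three {m : ℕ} (h : m % 6 = 3) :
    padicValNat 2 (2 * Nat.fib (m+1) - Nat.fib m) = 2 := by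
  apply val_two
  have h8 := fib_mod_eight m
  have h8' := fib_mod_eight (m+1)
  have hle : Nat.fib m ≤ Nat.fib (m+1) := Nat.fib_le_fib_succ
  have hm12 : m % 12 = 3 ∨ m % 12 = 9 := by omega
  rcases hm12 with hm | hm
  · have h1 : (m+1) % 12 = 4 := by omega
    rw [hm] at h8; rw [h1] at h8'
    have : Nat.fib 3 = 2 := by decide
    have : Nat.fib 4 = 3 := by decide
    omega
  · have h1 : (m+1) % 12 = 10 := by omega
    rw [hm] at h8; rw [h1] at h8'
    have : Nat.fib 9 = 34 := by decide
    have : Nat.fib 10 = 55 := by decide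
    omega

/-- Lucas-number factor valuation when `6 ∣ m`. -/
private lemma lucas_val_of_six {m : ℕ} (h : m % 6 = 0) :
    padicValNat 2 (2 * Nat.fib (m+1) - Nat.fib m) = 1 := by
  apply val_one
  have h4 := fib_mod_four m
  have h2 := fib_mod_two (m+1)
  have hle : Nat.fib m ≤ Nat.fib (m+1) := Nat.fib_le_fib_succ
  rw [h] at h4
  have h1 : (m+1) % 3 = 1 := by omega
  rw [h1] at h2
  have e0 : Nat.fib 0 = 0 := by decide
  have e1 : Nat.fib 1 = 1 := by decide
  rw [e0] at h4; rw [e1] at h2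
  omega

private lemma fib_val_three {m : ℕ} (h : m % 6 = 3) : padicValNat 2 (Nat.fib m) = 1 := by
  apply val_one
  have h4 := fib_mod_four m
  rw [h] at h4
  have e3 : Nat.fib 3 = 2 := by decide
  rw [e3] at h4
  omega

private lemma main_six : ∀ k, 1 ≤ k →
    padicValNat 2 (Nat.fib (6 * k)) = padicValNat 2 (6 * k) + 2 := by
  intro k
  induction k using Nat.strong_induction_on with
  | _ k ih =>
    intro hk
    rcases Nat.even_or_odd k with ⟨j, rfl⟩ | ⟨j, rfl⟩
    · -- k = 2j
      have hj : 1 ≤ j := by omega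
      have heq : 6 * (j + j) = 2 * (6 * j) := by ring
      rw [heq, Nat.fib_two_mul]
      have hL : padicValNat 2 (2 * Nat.fib (6*j+1) - Nat.fib (6*j)) = 1 :=
        lucas_val_of_six (by omega)
      have hfibpos : 0 < Nat.fib (6*j) := Nat.fib_pos.mpr (by omega)
      have hLpos : 0 < 2 * Nat.fib (6*j+1) - Nat.fib (6*j) := by
        have := @val_one (2 * Nat.fib (6*j+1) - Nat.fib (6*j))
        -- positivity from mod 4 = 2; derive directly:
        have h4 := fib_mod_four (6*j)
        have h2 := fib_mod_two (6*j+1)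
        have hle : Nat.fib (6*j) ≤ Nat.fib (6*j+1) := Nat.fib_le_fib_succ
        have : (6*j) % 6 = 0 := by omega
        rw [this] at h4
        have h1 : (6*j+1) % 3 = 1 := by omega
        rw [h1] at h2
        have e0 : Nat.fib 0 = 0 := by decide
        have e1 : Nat.fib 1 = 1 := by decide
        rw [e0] at h4; rw [e1] at h2
        omega
      have hr : padicValNat 2 (2 * (6 * j)) = padicValNat 2 (6 * j) + 1 := by
        rw [padicValNat.mul (by norm_num) (by omega), padicValNat.self (by norm_num)]
        omega
      rw [padicValNat.mul (by omega) (by omega), hL, ih j (by omega) hj, hr]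
    · -- k odd
      set k := 2 * j + 1 with hkdef
      have heq : 6 * k = 2 * (3 * k) := by ring
      rw [heq, Nat.fib_two_mul]
      have h3k : (3 * k) % 6 = 3 := by omega
      have hL : padicValNat 2 (2 * Nat.fib (3*k+1) - Nat.fib (3*k)) = 2 :=
        lucas_val_of_three h3k
      have hF : padicValNat 2 (Nat.fib (3*k)) = 1 := fib_val_three h3k
      have hfibpos : 0 < Nat.fib (3*k) := Nat.fib_pos.mpr (by omega)
      have hLpos : 0 < 2 * Nat.fib (3*k+1) - Nat.fib (3*k) := by
        have h8 := fib_mod_eight (3*k)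
        have h8' := fib_mod_eight (3*k+1)
        have hle : Nat.fib (3*k) ≤ Nat.fib (3*k+1) := Nat.fib_le_fib_succ
        have hm12 : (3*k) % 12 = 3 ∨ (3*k) % 12 = 9 := by omega
        rcases hm12 with hm | hm
        · have h1 : (3*k+1) % 12 = 4 := by omega
          rw [hm] at h8; rw [h1] at h8'
          have : Nat.fib 3 = 2 := by decide
          have : Nat.fib 4 = 3 := by decide
          omega
        · have h1 : (3*k+1) % 12 = 10 := by omega
          rw [hm] at h8; rw [h1] at h8'
          have : Nat.fib 9 = 34 := by decide
          have : Nat.fib 10 = 55 := by decide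
          omega
      rw [padicValNat.mul (by omega) (by omega), hF, hL]
      have : padicValNat 2 (2 * (3 * k)) = 1 := val_one (by omega)
      rw [this]

/-- Lengyel's formula for the 2-adic valuation of Fibonacci numbers:
`ord_2(F_n) = 0` if `n ≡ 1, 2 (mod 3)`, `ord_2(F_n) = 1` if `n ≡ 3 (mod 6)`, and
`ord_2(F_n) = ord_2(n) + 2` if `n ≡ 0 (mod 6)`. -/
theorem padicValNat_two_fib (n : ℕ) (hn : 1 ≤ n) :
    ((n % 3 = 1 ∨ n % 3 = 2) → padicValNat 2 (Nat.fib n) = 0) ∧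
    (n % 6 = 3 → padicValNat 2 (Nat.fib n) = 1) ∧
    (n % 6 = 0 → padicValNat 2 (Nat.fib n) = padicValNat 2 n + 2) := by
  refine ⟨fun h => ?_, fun h => fib_val_three h, fun h => ?_⟩
  · apply val_of_odd
    have h2 := fib_mod_two n
    rcases h with h | h <;> rw [h] at h2 <;> simpa using h2
  · obtain ⟨k, rfl⟩ : ∃ k, n = 6 * k := ⟨n / 6, by omega⟩
    exact main_six k (by omega)
end

section
/- Let p be a prime with p ≠ 2 and p ≠ 5, and let N_p be the rank of apparition of p, i.e. the smallest integer n ≥ 1 such that p divides F_n. Then for every integer n ≥ 1: if N_p divides n, then ord_p(F_n) = ord_p(n) + ord_p(F_{N_p}), and if N_p does not divide n, then ord_p(F_n) = 0. -/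
open Nat


lemma fibpadic_binet (K : Type*) [Field K] (r : K) (hr : r ^ 2 = 5) (n : ℕ) :
    (2 : K) ^ n * (fib n : K) * r = (1 + r) ^ n - (1 - r) ^ n := by
  induction n using Nat.twoStepInduction with
  | zero => simp
  | one => push_cast [fib_one]; ring
  | more n ih1 ih2 =>
    rw [fib_add_two]
    push_cast
    linear_combination 2 * ih2 + 4 * ih1 + ((1 - r) ^ n - (1 + r) ^ n) * hr

lemma fibpadic_mod_p_facts (p : ℕ) (hp : p.Prime) (hp2 : p ≠ 2) (hp5 : p ≠ 5) :
    ¬ p ∣ fib p ∧ (p ∣ fib (p - 1) ∨ p ∣ fib (p + 1)) := by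
  haveI : Fact p.Prime := ⟨hp⟩
  set K := AlgebraicClosure (ZMod p) with hK
  haveI : CharP K p := charP_of_injective_algebraMap
    (RingHom.injective (algebraMap (ZMod p) K)) p
  obtain ⟨r, hr⟩ := IsAlgClosed.exists_pow_nat_eq (5 : K) (n := 2) (by norm_num)
  have hodd : Odd p := hp.odd_of_ne_two hp2
  have hdvd : ∀ m : ℕ, (m : K) = 0 ↔ p ∣ m := fun m => CharP.cast_eq_zero_iff K p m
  have hpd : ∀ m : ℕ, p ∣ m → m = p ∨ ¬ m.Prime := by
    intro m hm; by_cases h : m.Prime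
    · exact Or.inl ((Nat.prime_dvd_prime_iff_eq hp h).1 hm).symm
    · exact Or.inr h
  have h2 : (2 : K) ≠ 0 := by
    intro h
    exact hp2 ((Nat.prime_dvd_prime_iff_eq hp Nat.prime_two).1 ((hdvd 2).1 (by exact_mod_cast h)))
  have h5 : (5 : K) ≠ 0 := by
    intro h
    exact hp5 ((Nat.prime_dvd_prime_iff_eq hp (by norm_num)).1 ((hdvd 5).1 (by exact_mod_cast h)))
  have h4 : (4 : K) ≠ 0 := by
    intro h
    have : (2:K) * 2 = 0 := by linear_combination h
    rcases mul_eq_zero.1 this with h' | h' <;> exact h2 h'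
  have hrne : r ≠ 0 := by intro h; rw [h] at hr; simp at hr; exact h5 hr.symm
  have hane : (1 + r) ≠ 0 := by
    intro h; exact h4 (by linear_combination (r - 1) * h - hr)
  have hbne : (1 - r) ≠ 0 := by
    intro h; exact h4 (by linear_combination (-(1 + r)) * h - hr)
  -- epsilon
  set e : K := (5 : K) ^ ((p - 1) / 2) with he
  have hp1 : 2 * ((p - 1) / 2) = p - 1 :=
    Nat.mul_div_cancel' (Even.two_dvd (Nat.Prime.even_sub_one hp hp2))
  have hesq : e * e = 1 := by
    rw [he, ← pow_add, ← two_mul, hp1]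
    have h5z : (5 : ZMod p) ≠ 0 := by
      intro h
      apply h5
      have : ((5:ℕ) : ZMod p) = 0 := by exact_mod_cast h
      rw [ZMod.natCast_eq_zero_iff] at this
      exact (hdvd 5).2 this
    have := ZMod.pow_card_sub_one_eq_one h5z
    have h1 := congrArg (algebraMap (ZMod p) K) this
    rw [map_pow, map_one, map_ofNat] at h1
    exact h1
  have heor : e = 1 ∨ e = -1 := mul_self_eq_one_iff.1 hesq
  have hp3 : 2 ≤ p := hp.two_le
  have hppred : p = 2 * ((p - 1) / 2) + 1 := by omega
  have hrp : r ^ p = e * r := by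
    calc r ^ p = r ^ (2 * ((p - 1) / 2) + 1) := by rw [← hppred]
    _ = e * r := by rw [pow_succ, pow_mul, hr, he]
  have hap : (1 + r) ^ p = 1 + e * r := by
    rw [add_pow_char, one_pow, hrp]
  have hbp : (1 - r) ^ p = 1 - e * r := by
    rw [sub_eq_add_neg, add_pow_char, one_pow, hodd.neg_pow, hrp, ← sub_eq_add_neg]
  have B := fibpadic_binet K r hr
  rcases heor with he1 | he1
  · -- e = 1 : alpha^p = alpha, fib p ≡ ±1, p ∣ fib (p-1)
    rw [he1, one_mul] at hap hbp
    constructor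
    · intro hd
      have hf : (fib p : K) = 0 := (hdvd _).2 hd
      have := B p
      rw [hf, hap, hbp, mul_zero, zero_mul] at this
      have : (2 : K) * r = 0 := by linear_combination -this
      rcases mul_eq_zero.1 this with h' | h'
      · exact h2 h'
      · exact hrne h'
    · left
      have ha1 : (1 + r) ^ (p - 1) = 1 := by
        have : (1 + r) ^ (p - 1) * (1 + r) = 1 * (1 + r) := by
          rw [one_mul, ← pow_succ]
          have : p - 1 + 1 = p := by omega
          rw [this, hap]
        exact mul_right_cancel₀ hane this
      have hb1 : (1 - r) ^ (p - 1) = 1 := by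
        have : (1 - r) ^ (p - 1) * (1 - r) = 1 * (1 - r) := by
          rw [one_mul, ← pow_succ]
          have : p - 1 + 1 = p := by omega
          rw [this, hbp]
        exact mul_right_cancel₀ hbne this
      have := B (p - 1)
      rw [ha1, hb1, sub_self] at this
      rw [← hdvd]
      rcases mul_eq_zero.1 this with h' | h'
      · rcases mul_eq_zero.1 h' with h'' | h''
        · exact absurd h'' (pow_ne_zero _ h2)
        · exact h''
      · exact absurd h' hrne
  · -- e = -1 : alpha^p = beta
    rw [he1] at hap hbp
    have hap' : (1 + r) ^ p = 1 - r := by rw [hap]; ring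
    have hbp' : (1 - r) ^ p = 1 + r := by rw [hbp]; ring
    constructor
    · intro hd
      have hf : (fib p : K) = 0 := (hdvd _).2 hd
      have := B p
      rw [hf, hap', hbp', mul_zero, zero_mul] at this
      have : (2 : K) * r = 0 := by linear_combination this
      rcases mul_eq_zero.1 this with h' | h'
      · exact h2 h'
      · exact hrne h'
    · right
      have ha1 : (1 + r) ^ (p + 1) = 1 - r ^ 2 := by
        rw [pow_succ, hap']; ring
      have hb1 : (1 - r) ^ (p + 1) = 1 - r ^ 2 := by
        rw [pow_succ, hbp']; ring
      have := B (p + 1)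
      rw [ha1, hb1, sub_self] at this
      rw [← hdvd]
      rcases mul_eq_zero.1 this with h' | h'
      · rcases mul_eq_zero.1 h' with h'' | h''
        · exact absurd h'' (pow_ne_zero _ h2)
        · exact h''
      · exact absurd h' hrne


lemma fibpadic_core (M' : ℕ) (m : ℕ) :
    ((fib (M'+1) : ℤ)^3 ∣ (fib M' : ℤ)^2 * (fib ((M'+1)*m) : ℤ) -
      ((m : ℤ) * (fib M' : ℤ)^(m+1) * (fib (M'+1) : ℤ) +
        (m.choose 2 : ℤ) * (fib M' : ℤ)^m * (fib (M'+1) : ℤ)^2)) ∧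
    ((fib (M'+1) : ℤ)^3 ∣ (fib M' : ℤ)^2 * (fib ((M'+1)*m + 1) : ℤ) -
      ((fib M' : ℤ)^(m+2) + (m : ℤ) * (fib M' : ℤ)^(m+1) * (fib (M'+1) : ℤ) +
        2 * (m.choose 2 : ℤ) * (fib M' : ℤ)^m * (fib (M'+1) : ℤ)^2)) := by
  set C : ℤ := (fib M' : ℤ) with hC
  set A : ℤ := (fib (M'+1) : ℤ) with hA
  induction m with
  | zero => simp
  | succ m ih =>
    obtain ⟨⟨k1, e1⟩, ⟨k2, e2⟩⟩ := ih
    have hx : (fib ((M'+1)*(m+1)) : ℤ) = (fib ((M'+1)*m) : ℤ) * C + (fib ((M'+1)*m + 1) : ℤ) * A := by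
      have e : (M'+1)*(m+1) = (M'+1)*m + M' + 1 := by ring
      rw [e, fib_add]
      push_cast
      ring
    have hy : (fib ((M'+1)*(m+1) + 1) : ℤ) = (fib ((M'+1)*m) : ℤ) * A + (fib ((M'+1)*m + 1) : ℤ) * (A + C) := by
      have e : (M'+1)*(m+1) + 1 = (M'+1)*m + (M'+1) + 1 := by ring
      have hb : (fib (M'+2) : ℤ) = A + C := by
        rw [fib_add_two]; push_cast; ring
      rw [e, fib_add]
      push_cast [← hb]
      ring
    have hch : ((m+1).choose 2 : ℤ) = (m : ℤ) + (m.choose 2 : ℤ) := by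
      rw [Nat.choose_succ_succ' m 1]
      push_cast [Nat.choose_one_right]
      ring
    constructor
    · refine ⟨C * k1 + A * k2 + 2 * (m.choose 2 : ℤ) * C^m, ?_⟩
      have exp : C^2 * (fib ((M'+1)*(m+1)) : ℤ) = C * (C^2 * (fib ((M'+1)*m) : ℤ)) + A * (C^2 * (fib ((M'+1)*m+1) : ℤ)) := by
        rw [hx]; ring
      rw [exp, hch]
      rw [sub_eq_iff_eq_add] at e1 e2
      rw [e1, e2]
      push_cast
      ring
    · refine ⟨A * k1 + (A + C) * k2 + 3 * (m.choose 2 : ℤ) * C^m, ?_⟩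
      have exp : C^2 * (fib ((M'+1)*(m+1) + 1) : ℤ) = A * (C^2 * (fib ((M'+1)*m) : ℤ)) + (A + C) * (C^2 * (fib ((M'+1)*m+1) : ℤ)) := by
        rw [hy]; ring
      rw [exp, hch]
      rw [sub_eq_iff_eq_add] at e1 e2
      rw [e1, e2]
      push_cast
      ring

lemma fibpadic_not_dvd_pred {p M' : ℕ} (hp : p.Prime) (hpM : p ∣ fib (M' + 1)) :
    ¬ (p ∣ fib M') := by
  intro h
  have hc : Nat.Coprime (fib M') (fib (M' + 1)) := fib_coprime_fib_succ M'
  have : p ∣ Nat.gcd (fib M') (fib (M' + 1)) := Nat.dvd_gcd h hpM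
  rw [hc] at this
  exact hp.one_lt.ne' (Nat.dvd_one.1 (hc ▸ this))

lemma fibpadic_L1 {p M' : ℕ} (hp : p.Prime) (hpM : p ∣ fib (M' + 1)) {m : ℕ} (hm : ¬ p ∣ m) :
    padicValNat p (fib ((M' + 1) * m)) = padicValNat p (fib (M' + 1)) := by
  haveI : Fact p.Prime := ⟨hp⟩
  have hm0 : 0 < m := Nat.pos_of_ne_zero (by rintro rfl; exact hm (dvd_zero p))
  have hfM : fib (M' + 1) ≠ 0 := (fib_pos.2 (Nat.succ_pos M')).ne'
  have hfMm : fib ((M' + 1) * m) ≠ 0 := (fib_pos.2 (Nat.mul_pos (Nat.succ_pos M') hm0)).ne'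
  set K := padicValNat p (fib (M' + 1)) with hKdef
  have hK1 : 1 ≤ K := one_le_padicValNat_of_dvd hfM hpM
  have hdvdK : p ^ K ∣ fib ((M' + 1) * m) :=
    dvd_trans pow_padicValNat_dvd (fib_dvd _ _ (dvd_mul_right _ m))
  refine le_antisymm ?_ ((padicValNat_dvd_iff_le hfMm).1 hdvdK)
  by_contra hlt
  push_neg at hlt
  have hsucc : p ^ (K + 1) ∣ fib ((M' + 1) * m) := (padicValNat_dvd_iff_le hfMm).2 hlt
  -- move to ℤ
  have hpZ : Prime (p : ℤ) := Nat.prime_iff_prime_int.1 hp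
  have hZ : (p : ℤ) ^ (K + 1) ∣ (fib ((M' + 1) * m) : ℤ) := by
    exact_mod_cast Int.natCast_dvd_natCast.2 hsucc
  have hAK : (p : ℤ) ^ K ∣ (fib (M' + 1) : ℤ) := by
    rw [hKdef]
    exact_mod_cast pow_padicValNat_dvd
  have hA2 : (p : ℤ) ^ (K + 1) ∣ (fib (M' + 1) : ℤ) ^ 2 := by
    calc (p : ℤ) ^ (K + 1) ∣ (p : ℤ) ^ (2 * K) := pow_dvd_pow _ (by omega)
    _ = ((p : ℤ) ^ K) ^ 2 := by rw [← pow_mul, mul_comm]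
    _ ∣ (fib (M' + 1) : ℤ) ^ 2 := pow_dvd_pow_of_dvd hAK 2
  have hA3 : (p : ℤ) ^ (K + 1) ∣ (fib (M' + 1) : ℤ) ^ 3 := by
    calc (p : ℤ) ^ (K + 1) ∣ (p : ℤ) ^ (3 * K) := pow_dvd_pow _ (by omega)
    _ = ((p : ℤ) ^ K) ^ 3 := by rw [← pow_mul, mul_comm]
    _ ∣ (fib (M' + 1) : ℤ) ^ 3 := pow_dvd_pow_of_dvd hAK 3
  obtain ⟨t, ht⟩ := (fibpadic_core M' m).1
  have key : (p : ℤ) ^ (K + 1) ∣ ((m : ℤ) * (fib M' : ℤ) ^ (m + 1)) * (fib (M' + 1) : ℤ) := by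
    have e : ((m : ℤ) * (fib M' : ℤ) ^ (m + 1)) * (fib (M' + 1) : ℤ) =
        (fib M' : ℤ) ^ 2 * (fib ((M' + 1) * m) : ℤ) - (m.choose 2 : ℤ) * (fib M' : ℤ) ^ m * (fib (M' + 1) : ℤ) ^ 2 - (fib (M' + 1) : ℤ) ^ 3 * t := by
      rw [sub_eq_iff_eq_add] at ht
      rw [ht]; ring
    rw [e]
    exact dvd_sub (dvd_sub (hZ.mul_left _) ((hA2.mul_left _))) (hA3.mul_right _)
  have hnd : ¬ (p : ℤ) ∣ (m : ℤ) * (fib M' : ℤ) ^ (m + 1) := by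
    intro h
    rcases hpZ.dvd_mul.1 h with h' | h'
    · exact hm (Int.natCast_dvd_natCast.1 h')
    · exact (fibpadic_not_dvd_pred hp hpM) (Int.natCast_dvd_natCast.1 (hpZ.dvd_of_dvd_pow h'))
  have : (p : ℤ) ^ (K + 1) ∣ (fib (M' + 1) : ℤ) := hpZ.pow_dvd_of_dvd_mul_left _ hnd key
  have : p ^ (K + 1) ∣ fib (M' + 1) := by exact_mod_cast this
  exact pow_succ_padicValNat_not_dvd hfM this

lemma fibpadic_L2 {p M' : ℕ} (hp : p.Prime) (hp2 : p ≠ 2) (hpM : p ∣ fib (M' + 1)) :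
    padicValNat p (fib ((M' + 1) * p)) = padicValNat p (fib (M' + 1)) + 1 := by
  haveI : Fact p.Prime := ⟨hp⟩
  have hfM : fib (M' + 1) ≠ 0 := (fib_pos.2 (Nat.succ_pos M')).ne'
  have hfMm : fib ((M' + 1) * p) ≠ 0 := (fib_pos.2 (Nat.mul_pos (Nat.succ_pos M') hp.pos)).ne'
  set K := padicValNat p (fib (M' + 1)) with hKdef
  have hK1 : 1 ≤ K := one_le_padicValNat_of_dvd hfM hpM
  have hpZ : Prime (p : ℤ) := Nat.prime_iff_prime_int.1 hp
  have hAK : (p : ℤ) ^ K ∣ (fib (M' + 1) : ℤ) := by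
    rw [hKdef]
    exact_mod_cast pow_padicValNat_dvd
  have hCnd : ¬ (p : ℤ) ∣ (fib M' : ℤ) := fun h =>
    (fibpadic_not_dvd_pred hp hpM) (Int.natCast_dvd_natCast.1 h)
  have hch : (p : ℤ) ∣ (p.choose 2 : ℤ) :=
    Int.natCast_dvd_natCast.2 (Nat.Prime.dvd_choose_self hp (by norm_num)
      (lt_of_le_of_ne hp.two_le (Ne.symm hp2)))
  obtain ⟨t, ht⟩ := (fibpadic_core M' p).1
  rw [sub_eq_iff_eq_add] at ht
  -- ht : (fib M' : ℤ) ^ 2 * fib ((M'+1)*p) = pC^{p+1}(fib (M' + 1) : ℤ) + ch (fib M' : ℤ)^p (fib (M' + 1) : ℤ)^2 + (fib (M' + 1) : ℤ)^3 t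
  refine le_antisymm ?_ ?_
  · -- v ≤ K + 1 : ¬ p^{K+2} ∣ fib
    by_contra hlt
    push_neg at hlt
    have hsucc : p ^ (K + 2) ∣ fib ((M' + 1) * p) := (padicValNat_dvd_iff_le hfMm).2 hlt
    have hZ : (p : ℤ) ^ (K + 2) ∣ (fib ((M' + 1) * p) : ℤ) := by
      exact_mod_cast Int.natCast_dvd_natCast.2 hsucc
    have hA2 : (p : ℤ) ^ (K + 2) ∣ (p : ℤ) * (fib (M' + 1) : ℤ) ^ 2 := by
      have : (p : ℤ) ^ (K + 2) ∣ (p : ℤ) ^ (1 + 2 * K) := pow_dvd_pow _ (by omega)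
      refine this.trans ?_
      rw [pow_add, pow_one]
      exact mul_dvd_mul dvd_rfl (by rw [mul_comm 2 K, pow_mul]; exact pow_dvd_pow_of_dvd hAK 2)
    have hA3 : (p : ℤ) ^ (K + 2) ∣ (fib (M' + 1) : ℤ) ^ 3 := by
      calc (p : ℤ) ^ (K + 2) ∣ (p : ℤ) ^ (3 * K) := pow_dvd_pow _ (by omega)
      _ = ((p : ℤ) ^ K) ^ 3 := by rw [← pow_mul, mul_comm]
      _ ∣ (fib (M' + 1) : ℤ) ^ 3 := pow_dvd_pow_of_dvd hAK 3
    have key : (p : ℤ) ^ (K + 2) ∣ ((p : ℤ) * (fib M' : ℤ) ^ (p + 1)) * (fib (M' + 1) : ℤ) := by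
      obtain ⟨s, hs⟩ := hch
      have e : ((p : ℤ) * (fib M' : ℤ) ^ (p + 1)) * (fib (M' + 1) : ℤ) =
          (fib M' : ℤ) ^ 2 * (fib ((M' + 1) * p) : ℤ) - ((p : ℤ) * s) * (fib M' : ℤ) ^ p * (fib (M' + 1) : ℤ) ^ 2 - (fib (M' + 1) : ℤ) ^ 3 * t := by
        rw [ht, ← hs]; ring
      rw [e]
      refine dvd_sub (dvd_sub (hZ.mul_left _) ?_) (hA3.mul_right _)
      have : ((p : ℤ) * s) * (fib M' : ℤ) ^ p * (fib (M' + 1) : ℤ) ^ 2 = ((p : ℤ) * (fib (M' + 1) : ℤ) ^ 2) * (s * (fib M' : ℤ) ^ p) := by ring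
      rw [this]
      exact hA2.mul_right _
    have hnd : ¬ (p : ℤ) ∣ (fib M' : ℤ) ^ (p + 1) := fun h => hCnd (hpZ.dvd_of_dvd_pow h)
    have key2 : (p : ℤ) ^ (K + 1) ∣ (fib M' : ℤ) ^ (p + 1) * (fib (M' + 1) : ℤ) := by
      have e : (p : ℤ) ^ (K + 2) = (p : ℤ) * (p : ℤ) ^ (K + 1) := by ring
      have : (p : ℤ) * ((p:ℤ)^(K+1)) ∣ (p : ℤ) * ((fib M' : ℤ) ^ (p + 1) * (fib (M' + 1) : ℤ)) := by
        rw [← e]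
        have e2 : (p : ℤ) * ((fib M' : ℤ) ^ (p + 1) * (fib (M' + 1) : ℤ)) = ((p : ℤ) * (fib M' : ℤ) ^ (p + 1)) * (fib (M' + 1) : ℤ) := by ring
        rw [e2]; exact key
      exact (mul_dvd_mul_iff_left (by exact_mod_cast hp.ne_zero : (p:ℤ) ≠ 0)).1 this
    have : (p : ℤ) ^ (K + 1) ∣ (fib (M' + 1) : ℤ) := hpZ.pow_dvd_of_dvd_mul_left _ hnd key2
    have : p ^ (K + 1) ∣ fib (M' + 1) := by exact_mod_cast this
    exact pow_succ_padicValNat_not_dvd hfM this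
  · -- K + 1 ≤ v : p^{K+1} ∣ fib
    have hA2' : (p : ℤ) ^ (K + 1) ∣ (fib (M' + 1) : ℤ) ^ 2 := by
      calc (p : ℤ) ^ (K + 1) ∣ (p : ℤ) ^ (2 * K) := pow_dvd_pow _ (by omega)
      _ = ((p : ℤ) ^ K) ^ 2 := by rw [← pow_mul, mul_comm]
      _ ∣ (fib (M' + 1) : ℤ) ^ 2 := pow_dvd_pow_of_dvd hAK 2
    have t1 : (p : ℤ) ^ (K + 1) ∣ (p : ℤ) * (fib M' : ℤ) ^ (p + 1) * (fib (M' + 1) : ℤ) := by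
      obtain ⟨A', hA'⟩ := hAK
      exact ⟨(fib M' : ℤ) ^ (p + 1) * A', by rw [hA']; ring⟩
    have t2 : (p : ℤ) ^ (K + 1) ∣ (p.choose 2 : ℤ) * (fib M' : ℤ) ^ p * (fib (M' + 1) : ℤ) ^ 2 := by
      have e : (p.choose 2 : ℤ) * (fib M' : ℤ) ^ p * (fib (M' + 1) : ℤ) ^ 2 = (fib (M' + 1) : ℤ) ^ 2 * ((p.choose 2 : ℤ) * (fib M' : ℤ) ^ p) := by ring
      rw [e]; exact (hA2'.mul_right _)
    have t3 : (p : ℤ) ^ (K + 1) ∣ (fib (M' + 1) : ℤ) ^ 3 * t := by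
      refine Dvd.dvd.mul_right ?_ t
      calc (p : ℤ) ^ (K + 1) ∣ (p : ℤ) ^ (3 * K) := pow_dvd_pow _ (by omega)
      _ = ((p : ℤ) ^ K) ^ 3 := by rw [← pow_mul, mul_comm]
      _ ∣ (fib (M' + 1) : ℤ) ^ 3 := pow_dvd_pow_of_dvd hAK 3
    have key : (p : ℤ) ^ (K + 1) ∣ (fib M' : ℤ) ^ 2 * (fib ((M' + 1) * p) : ℤ) := by
      rw [ht]
      exact dvd_add t3 (dvd_add t1 t2)
    have hnd : ¬ (p : ℤ) ∣ (fib M' : ℤ) ^ 2 := fun h => hCnd (hpZ.dvd_of_dvd_pow h)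
    have hZ : (p : ℤ) ^ (K + 1) ∣ (fib ((M' + 1) * p) : ℤ) :=
      hpZ.pow_dvd_of_dvd_mul_left _ hnd key
    have : p ^ (K + 1) ∣ fib ((M' + 1) * p) := by exact_mod_cast hZ
    exact (padicValNat_dvd_iff_le hfMm).1 this

/-- for a prime `p ∉ {2, 5}` with rank of apparition `N` (the least `n ≥ 1`
with `p ∣ F_n`), for every `n ≥ 1`: if `N ∣ n` then
`ord_p(F_n) = ord_p(n) + ord_p(F_N)`, and otherwise `ord_p(F_n) = 0`. -/
theorem padicValNat_fib_rank_of_apparition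
    (p : ℕ) (hp : p.Prime) (hp2 : p ≠ 2) (hp5 : p ≠ 5)
    (N : ℕ) (hN0 : 0 < N) (hNdvd : p ∣ Nat.fib N)
    (hNmin : ∀ m : ℕ, 0 < m → p ∣ Nat.fib m → N ≤ m)
    (n : ℕ) (hn : 1 ≤ n) :
    (N ∣ n → padicValNat p (Nat.fib n) = padicValNat p n + padicValNat p (Nat.fib N)) ∧
    (¬ N ∣ n → padicValNat p (Nat.fib n) = 0) := by
  haveI : Fact p.Prime := ⟨hp⟩
  have hp3 : 3 ≤ p := by
    rcases hp.two_le.lt_or_eq with h | h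
    · omega
    · omega
  constructor
  · -- N ∣ n
    rintro ⟨m, rfl⟩
    have hm0 : 0 < m := by
      rcases Nat.eq_zero_or_pos m with rfl | h
      · simp at hn
      · exact h
    -- p does not divide N
    obtain ⟨hfp, hor⟩ := fibpadic_mod_p_facts p hp hp2 hp5
    have hpN : ¬ p ∣ N := by
      intro hdN
      have hNp : p ≤ N := Nat.le_of_dvd hN0 hdN
      rcases hor with h | h
      · have := hNmin (p - 1) (by omega) h
        omega
      · have hle := hNmin (p + 1) (by omega) h
        have : N = p ∨ N = p + 1 := by
          rcases Nat.eq_or_lt_of_le hNp with h' | h'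
          · exact Or.inl h'.symm
          · omega
        rcases this with rfl | rfl
        · exact hfp hNdvd
        · have h1 : p ∣ 1 := by simpa using Nat.dvd_sub hdN (dvd_refl p)
          have := Nat.dvd_one.1 h1
          omega
    -- decompose m = p^t * u
    set t := padicValNat p m with ht
    obtain ⟨u, hut⟩ : ∃ u, m = p ^ t * u :=
      ⟨m / p ^ t, (Nat.mul_div_cancel' pow_padicValNat_dvd).symm⟩
    have hu0 : 0 < u := by
      rcases Nat.eq_zero_or_pos u with rfl | h
      · omega
      · exact h
    have hpu : ¬ p ∣ u := by
      intro hd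
      obtain ⟨v, rfl⟩ := hd
      have : p ^ (t + 1) ∣ m := ⟨v, by rw [hut]; ring⟩
      exact pow_succ_padicValNat_not_dvd hm0.ne' this
    -- step
    have step : ∀ s : ℕ, padicValNat p (fib (N * p ^ s)) = padicValNat p (fib N) + s := by
      intro s
      induction s with
      | zero => simp
      | succ s ih =>
        obtain ⟨M', hM'⟩ : ∃ M', N * p ^ s = M' + 1 :=
          ⟨N * p ^ s - 1, by have := Nat.mul_pos hN0 (Nat.pow_pos hp.pos : 0 < p ^ s); omega⟩
        have hpM : p ∣ fib (M' + 1) := by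
          rw [← hM']
          exact dvd_trans hNdvd (fib_dvd _ _ ⟨p ^ s, rfl⟩)
        have e : N * p ^ (s + 1) = (M' + 1) * p := by rw [← hM']; ring
        rw [e, fibpadic_L2 hp hp2 hpM, ← hM', ih]; omega
    -- main computation
    obtain ⟨M', hM'⟩ : ∃ M', N * p ^ t = M' + 1 :=
      ⟨N * p ^ t - 1, by have := Nat.mul_pos hN0 (Nat.pow_pos hp.pos : 0 < p ^ t); omega⟩
    have hpM : p ∣ fib (M' + 1) := by
      rw [← hM']
      exact dvd_trans hNdvd (fib_dvd _ _ ⟨p ^ t, rfl⟩)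
    have e : N * m = (M' + 1) * u := by rw [← hM', hut]; ring
    have lhs : padicValNat p (fib (N * m)) = padicValNat p (fib N) + t := by
      rw [e, fibpadic_L1 hp hpM hpu, ← hM', step t]
    have rhs : padicValNat p (N * m) = t := by
      rw [hut, padicValNat.mul hN0.ne' (by positivity),
        padicValNat.mul (by positivity) hu0.ne',
        padicValNat.eq_zero_of_not_dvd hpN,
        padicValNat.eq_zero_of_not_dvd hpu,
        padicValNat.prime_pow]
      omega
    rw [lhs, rhs, Nat.add_comm]
  · -- ¬ N ∣ n
    intro hndvd
    apply padicValNat.eq_zero_of_not_dvd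
    intro hpn
    have hg : p ∣ fib (Nat.gcd n N) := by
      rw [fib_gcd]
      exact Nat.dvd_gcd hpn hNdvd
    have hg0 : 0 < Nat.gcd n N := Nat.gcd_pos_of_pos_left N (by omega)
    have h1 := hNmin _ hg0 hg
    have h2 : Nat.gcd n N ≤ N := Nat.le_of_dvd hN0 (Nat.gcd_dvd_right n N)
    have : Nat.gcd n N = N := le_antisymm h2 h1
    exact hndvd (this ▸ Nat.gcd_dvd_left n N)
end
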